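/- arXiv:1306.3050 — 13 statements merged into one kernel-verified Lean document; each statement's English description precedes it below -/
import Mathlib

section
/- (Theorem 2.3, '∧ is And' for IA) Let P, Q, R be Interface Automata with common input alphabet I and common output alphabet O, with p a state of P, q a state of Q, and r a state of R. Then r ⊑_IA p and r ⊑_IA q if and only if r ⊑_IA p ∧ q, where p ∧ q is the state of the IA-conjunction P ∧ Q corresponding to the pair (p,q). In other words, the conjunction operator ∧ on IA yields the greatest lower bound with respect to IA-refinement. -/
/-- Transition labels: `none` is the silent action τ, `some a` a visible action. -/
abbrev Lbl (A : Type) : Type := Option A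

/-- Weak internal transition: a (possibly empty) sequence of τ-steps. -/
def WeakEps {S A : Type} (tr : S → Lbl A → S → Prop) : S → S → Prop :=
  Relation.ReflTransGen (fun p q => tr p none q)

/-- Weak transition: τ-steps followed by one step labelled `α`. -/
def WeakTr {S A : Type} (tr : S → Lbl A → S → Prop) (p : S) (α : Lbl A) (p' : S) : Prop :=
  ∃ p'', WeakEps tr p p'' ∧ tr p'' α p'

/-- State set of binary compositions: copies of both components plus combined states. -/
inductive CState (S T : Type) : Type
  | left : S → CState S T
  | right : T → CState S T
  | comb : S → T → CState S T

/-- `tr` is the transition relation of an Interface Automaton with inputs `I` and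
outputs `O`: disjoint alphabets, labels within `I ∪ O`, and input-determinism. -/
def IsIA {S A : Type} (I O : Set A) (tr : S → Lbl A → S → Prop) : Prop :=
  Disjoint I O ∧
  (∀ s a s', tr s (some a) s' → a ∈ I ∪ O) ∧
  (∀ s a s' s'', a ∈ I → tr s (some a) s' → tr s (some a) s'' → s' = s'')

/-- Alternating simulation relation between IAs with common alphabets `I`, `O`. -/
def IsAltSim {S T A : Type} (I O : Set A) (trP : S → Lbl A → S → Prop)
    (trQ : T → Lbl A → T → Prop) (R : S → T → Prop) : Prop :=
  ∀ p q, R p q →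
    (∀ a q', a ∈ I → trQ q (some a) q' → ∃ p', trP p (some a) p' ∧ R p' q') ∧
    (∀ a p', a ∈ O → trP p (some a) p' → ∃ q', WeakTr trQ q (some a) q' ∧ R p' q') ∧
    (∀ p', trP p none p' → ∃ q', WeakEps trQ q q' ∧ R p' q')

/-- IA-refinement `p ⊑_IA q`. -/
def IARef {S T A : Type} (I O : Set A) (trP : S → Lbl A → S → Prop)
    (trQ : T → Lbl A → T → Prop) (p : S) (q : T) : Prop :=
  ∃ R, IsAltSim I O trP trQ R ∧ R p q

/-- Transition relation of the IA-conjunction `P ∧ Q` (rules (I1)-(T2)),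
on the states `{p ∧ q | p ∈ P, q ∈ Q} ∪ P ∪ Q`. -/
inductive ConjTr {S T A : Type} (I O : Set A) (trP : S → Lbl A → S → Prop)
    (trQ : T → Lbl A → T → Prop) : CState S T → Lbl A → CState S T → Prop
  | fromP {p α p'} : trP p α p' → ConjTr I O trP trQ (CState.left p) α (CState.left p')
  | fromQ {q α q'} : trQ q α q' → ConjTr I O trP trQ (CState.right q) α (CState.right q')
  | i1 {p q a p'} : a ∈ I → trP p (some a) p' → ¬ (∃ q', trQ q (some a) q') →
      ConjTr I O trP trQ (CState.comb p q) (some a) (CState.left p')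
  | i2 {p q a q'} : a ∈ I → ¬ (∃ p', trP p (some a) p') → trQ q (some a) q' →
      ConjTr I O trP trQ (CState.comb p q) (some a) (CState.right q')
  | i3 {p q a p' q'} : a ∈ I → trP p (some a) p' → trQ q (some a) q' →
      ConjTr I O trP trQ (CState.comb p q) (some a) (CState.comb p' q')
  | out {p q a p' q'} : a ∈ O → trP p (some a) p' → trQ q (some a) q' →
      ConjTr I O trP trQ (CState.comb p q) (some a) (CState.comb p' q')
  | t1 {p q p'} : trP p none p' → ConjTr I O trP trQ (CState.comb p q) none (CState.comb p' q)
  | t2 {p q q'} : trQ q none q' → ConjTr I O trP trQ (CState.comb p q) none (CState.comb p q')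

section Aux
variable {S T A : Type} {I O : Set A} {trP : S → Lbl A → S → Prop} {trQ : T → Lbl A → T → Prop}

lemma weakEps_left_inv {p : S} {s : CState S T}
    (h : WeakEps (ConjTr I O trP trQ) (CState.left p) s) :
    ∃ p', s = CState.left p' ∧ WeakEps trP p p' := by
  induction h with
  | refl => exact ⟨p, rfl, Relation.ReflTransGen.refl⟩
  | tail _ step ih =>
    obtain ⟨p1, rfl, hw⟩ := ih
    cases step with
    | fromP h => exact ⟨_, rfl, hw.tail h⟩

lemma weakEps_right_inv {q : T} {s : CState S T}
    (h : WeakEps (ConjTr I O trP trQ) (CState.right q) s) :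
    ∃ q', s = CState.right q' ∧ WeakEps trQ q q' := by
  induction h with
  | refl => exact ⟨q, rfl, Relation.ReflTransGen.refl⟩
  | tail _ step ih =>
    obtain ⟨q1, rfl, hw⟩ := ih
    cases step with
    | fromQ h => exact ⟨_, rfl, hw.tail h⟩

lemma weakEps_comb_inv {p : S} {q : T} {s : CState S T}
    (h : WeakEps (ConjTr I O trP trQ) (CState.comb p q) s) :
    ∃ p' q', s = CState.comb p' q' ∧ WeakEps trP p p' ∧ WeakEps trQ q q' := by
  induction h with
  | refl => exact ⟨p, q, rfl, Relation.ReflTransGen.refl, Relation.ReflTransGen.refl⟩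
  | tail _ step ih =>
    obtain ⟨p1, q1, rfl, hwP, hwQ⟩ := ih
    cases step with
    | t1 h => exact ⟨_, _, rfl, hwP.tail h, hwQ⟩
    | t2 h => exact ⟨_, _, rfl, hwP, hwQ.tail h⟩

lemma weakEps_left_of {p p' : S} (h : WeakEps trP p p') :
    WeakEps (ConjTr I O trP trQ) (CState.left p) (CState.left (T := T) p') := by
  induction h with
  | refl => exact Relation.ReflTransGen.refl
  | tail _ step ih => exact ih.tail (ConjTr.fromP step)

lemma weakEps_right_of {q q' : T} (h : WeakEps trQ q q') :
    WeakEps (ConjTr I O trP trQ) (CState.right q) (CState.right (S := S) q') := by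
  induction h with
  | refl => exact Relation.ReflTransGen.refl
  | tail _ step ih => exact ih.tail (ConjTr.fromQ step)

lemma weakEps_comb_of {p p' : S} {q q' : T} (hp : WeakEps trP p p') (hq : WeakEps trQ q q') :
    WeakEps (ConjTr I O trP trQ) (CState.comb p q) (CState.comb p' q') := by
  have h1 : WeakEps (ConjTr I O trP trQ) (CState.comb p q) (CState.comb p' q) := by
    induction hp with
    | refl => exact Relation.ReflTransGen.refl
    | tail _ step ih => exact ih.tail (ConjTr.t1 step)
  have h2 : WeakEps (ConjTr I O trP trQ) (CState.comb p' q) (CState.comb p' q') := by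
    induction hq with
    | refl => exact Relation.ReflTransGen.refl
    | tail _ step ih => exact ih.tail (ConjTr.t2 step)
  exact h1.trans h2

end Aux

/-- Theorem 2.3 (`∧` is And): IA-conjunction is the greatest lower bound
with respect to IA-refinement. -/
theorem ia_conj_is_and {A S T U : Type} (I O : Set A)
    (trP : S → Lbl A → S → Prop) (trQ : T → Lbl A → T → Prop)
    (trR : U → Lbl A → U → Prop)
    (hP : IsIA I O trP) (hQ : IsIA I O trQ) (hR : IsIA I O trR)
    (p : S) (q : T) (r : U) :
    (IARef I O trR trP r p ∧ IARef I O trR trQ r q) ↔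
      IARef I O trR (ConjTr I O trP trQ) r (CState.comb p q) := by
  constructor
  · rintro ⟨⟨R1, hR1, hr1⟩, ⟨R2, hR2, hr2⟩⟩
    refine ⟨fun r s => match s with
      | .left p => R1 r p
      | .right q => R2 r q
      | .comb p q => R1 r p ∧ R2 r q, ?_, ⟨hr1, hr2⟩⟩
    intro r s hrs
    cases s with
    | left p =>
      refine ⟨?_, ?_, ?_⟩
      · intro a s' ha hstep
        cases hstep with
        | fromP h =>
          obtain ⟨r', htr, h1⟩ := (hR1 r p hrs).1 a _ ha h
          exact ⟨r', htr, h1⟩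
      · intro a r' ha hstep
        obtain ⟨p', ⟨p'', hw, hone⟩, h1⟩ := (hR1 r p hrs).2.1 a r' ha hstep
        exact ⟨CState.left p', ⟨CState.left p'', weakEps_left_of hw, ConjTr.fromP hone⟩, h1⟩
      · intro r' hstep
        obtain ⟨p', hw, h1⟩ := (hR1 r p hrs).2.2 r' hstep
        exact ⟨CState.left p', weakEps_left_of hw, h1⟩
    | right q =>
      refine ⟨?_, ?_, ?_⟩
      · intro a s' ha hstep
        cases hstep with
        | fromQ h =>
          obtain ⟨r', htr, h1⟩ := (hR2 r q hrs).1 a _ ha h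
          exact ⟨r', htr, h1⟩
      · intro a r' ha hstep
        obtain ⟨q', ⟨q'', hw, hone⟩, h1⟩ := (hR2 r q hrs).2.1 a r' ha hstep
        exact ⟨CState.right q', ⟨CState.right q'', weakEps_right_of hw, ConjTr.fromQ hone⟩, h1⟩
      · intro r' hstep
        obtain ⟨q', hw, h1⟩ := (hR2 r q hrs).2.2 r' hstep
        exact ⟨CState.right q', weakEps_right_of hw, h1⟩
    | comb p q =>
      obtain ⟨hrp, hrq⟩ := hrs
      refine ⟨?_, ?_, ?_⟩
      · intro a s' ha hstep
        cases hstep with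
        | i1 hI hp' hnq =>
          obtain ⟨r', htr, h1⟩ := (hR1 r p hrp).1 a _ ha hp'
          exact ⟨r', htr, h1⟩
        | i2 hI hnp hq' =>
          obtain ⟨r', htr, h1⟩ := (hR2 r q hrq).1 a _ ha hq'
          exact ⟨r', htr, h1⟩
        | i3 hI hp' hq' =>
          obtain ⟨r1, htr1, h1⟩ := (hR1 r p hrp).1 a _ ha hp'
          obtain ⟨r2, htr2, h2⟩ := (hR2 r q hrq).1 a _ ha hq'
          have := hR.2.2 r a r1 r2 ha htr1 htr2
          exact ⟨r1, htr1, h1, this ▸ h2⟩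
        | out hO hp' hq' =>
          exact absurd hO (Set.disjoint_left.mp hP.1 ha)
      · intro a r' ha hstep
        obtain ⟨p2, ⟨p1, hwP, hsP⟩, h1⟩ := (hR1 r p hrp).2.1 a r' ha hstep
        obtain ⟨q2, ⟨q1, hwQ, hsQ⟩, h2⟩ := (hR2 r q hrq).2.1 a r' ha hstep
        exact ⟨CState.comb p2 q2, ⟨CState.comb p1 q1, weakEps_comb_of hwP hwQ,
          ConjTr.out ha hsP hsQ⟩, h1, h2⟩
      · intro r' hstep
        obtain ⟨p', hwP, h1⟩ := (hR1 r p hrp).2.2 r' hstep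
        obtain ⟨q', hwQ, h2⟩ := (hR2 r q hrq).2.2 r' hstep
        exact ⟨CState.comb p' q', weakEps_comb_of hwP hwQ, h1, h2⟩
  · rintro ⟨R, hRsim, hr⟩
    constructor
    · refine ⟨fun r p => R r (CState.left p) ∨ ∃ q0, R r (CState.comb p q0), ?_,
        Or.inr ⟨q, hr⟩⟩
      intro r p0 hrp
      refine ⟨?_, ?_, ?_⟩
      · intro a p' ha hstep
        rcases hrp with h | ⟨q0, h⟩
        · obtain ⟨r', htr, hR'⟩ := (hRsim _ _ h).1 a (CState.left p') ha (ConjTr.fromP hstep)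
          exact ⟨r', htr, Or.inl hR'⟩
        · by_cases hq0 : ∃ q', trQ q0 (some a) q'
          · obtain ⟨q', hq'⟩ := hq0
            obtain ⟨r', htr, hR'⟩ := (hRsim _ _ h).1 a (CState.comb p' q') ha
              (ConjTr.i3 ha hstep hq')
            exact ⟨r', htr, Or.inr ⟨q', hR'⟩⟩
          · obtain ⟨r', htr, hR'⟩ := (hRsim _ _ h).1 a (CState.left p') ha
              (ConjTr.i1 ha hstep hq0)
            exact ⟨r', htr, Or.inl hR'⟩
      · intro a r' ha hstep
        rcases hrp with h | ⟨q0, h⟩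
        · obtain ⟨s', ⟨s'', hw, hone⟩, hR'⟩ := (hRsim _ _ h).2.1 a r' ha hstep
          obtain ⟨p1, rfl, hwP⟩ := weakEps_left_inv hw
          cases hone with
          | fromP h' => exact ⟨_, ⟨p1, hwP, h'⟩, Or.inl hR'⟩
        · obtain ⟨s', ⟨s'', hw, hone⟩, hR'⟩ := (hRsim _ _ h).2.1 a r' ha hstep
          obtain ⟨p1, q1, rfl, hwP, hwQ⟩ := weakEps_comb_inv hw
          cases hone with
          | i1 hI _ _ => exact absurd ha (Set.disjoint_left.mp hP.1 hI)
          | i2 hI _ _ => exact absurd ha (Set.disjoint_left.mp hP.1 hI)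
          | i3 hI _ _ => exact absurd ha (Set.disjoint_left.mp hP.1 hI)
          | out hO hsP hsQ => exact ⟨_, ⟨p1, hwP, hsP⟩, Or.inr ⟨_, hR'⟩⟩
      · intro r' hstep
        rcases hrp with h | ⟨q0, h⟩
        · obtain ⟨s', hw, hR'⟩ := (hRsim _ _ h).2.2 r' hstep
          obtain ⟨p1, rfl, hwP⟩ := weakEps_left_inv hw
          exact ⟨p1, hwP, Or.inl hR'⟩
        · obtain ⟨s', hw, hR'⟩ := (hRsim _ _ h).2.2 r' hstep
          obtain ⟨p1, q1, rfl, hwP, hwQ⟩ := weakEps_comb_inv hw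
          exact ⟨p1, hwP, Or.inr ⟨q1, hR'⟩⟩
    · refine ⟨fun r q => R r (CState.right q) ∨ ∃ p0, R r (CState.comb p0 q), ?_,
        Or.inr ⟨p, hr⟩⟩
      intro r q0 hrq
      refine ⟨?_, ?_, ?_⟩
      · intro a q' ha hstep
        rcases hrq with h | ⟨p0, h⟩
        · obtain ⟨r', htr, hR'⟩ := (hRsim _ _ h).1 a (CState.right q') ha (ConjTr.fromQ hstep)
          exact ⟨r', htr, Or.inl hR'⟩
        · by_cases hp0 : ∃ p', trP p0 (some a) p'
          · obtain ⟨p', hp'⟩ := hp0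
            obtain ⟨r', htr, hR'⟩ := (hRsim _ _ h).1 a (CState.comb p' q') ha
              (ConjTr.i3 ha hp' hstep)
            exact ⟨r', htr, Or.inr ⟨p', hR'⟩⟩
          · obtain ⟨r', htr, hR'⟩ := (hRsim _ _ h).1 a (CState.right q') ha
              (ConjTr.i2 ha hp0 hstep)
            exact ⟨r', htr, Or.inl hR'⟩
      · intro a r' ha hstep
        rcases hrq with h | ⟨p0, h⟩
        · obtain ⟨s', ⟨s'', hw, hone⟩, hR'⟩ := (hRsim _ _ h).2.1 a r' ha hstep
          obtain ⟨q1, rfl, hwQ⟩ := weakEps_right_inv hw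
          cases hone with
          | fromQ h' => exact ⟨_, ⟨q1, hwQ, h'⟩, Or.inl hR'⟩
        · obtain ⟨s', ⟨s'', hw, hone⟩, hR'⟩ := (hRsim _ _ h).2.1 a r' ha hstep
          obtain ⟨p1, q1, rfl, hwP, hwQ⟩ := weakEps_comb_inv hw
          cases hone with
          | i1 hI _ _ => exact absurd ha (Set.disjoint_left.mp hP.1 hI)
          | i2 hI _ _ => exact absurd ha (Set.disjoint_left.mp hP.1 hI)
          | i3 hI _ _ => exact absurd ha (Set.disjoint_left.mp hP.1 hI)
          | out hO hsP hsQ => exact ⟨_, ⟨q1, hwQ, hsQ⟩, Or.inr ⟨_, hR'⟩⟩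
      · intro r' hstep
        rcases hrq with h | ⟨p0, h⟩
        · obtain ⟨s', hw, hR'⟩ := (hRsim _ _ h).2.2 r' hstep
          obtain ⟨q1, rfl, hwQ⟩ := weakEps_right_inv hw
          exact ⟨q1, hwQ, Or.inl hR'⟩
        · obtain ⟨s', hw, hR'⟩ := (hRsim _ _ h).2.2 r' hstep
          obtain ⟨p1, q1, rfl, hwP, hwQ⟩ := weakEps_comb_inv hw
          exact ⟨q1, hwQ, Or.inr ⟨p1, hR'⟩⟩
end

section
/- (Corollary 2.4) IA-refinement is compositional with respect to IA-conjunction: for Interface Automata P, Q, R with common input and output alphabets and states p, q, r respectively, p ⊑_IA q implies p ∧ r ⊑_IA q ∧ r. -/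
/-!
An alternating simulation `R` between `P` and `Q` extends to one between `P ∧ R'` and `Q ∧ R'`
(`ConjRel R`): it relates `p ∧ r` to `q ∧ r` and `p` to `q` whenever `R p q`, each state `r` of
`R'` to itself, and also `p ∧ r` to `r`. The last pairs arise when `q ∧ r` takes an input that
only `r` accepts (rule (I2)) and `p ∧ r` answers it by (I3). They are harmless: `p ∧ r` accepts
every input of `r`, its τ-steps are matched by staying put, and, `I` and `O` being disjoint, its
outputs come from rule (O) only and are therefore outputs of `r`.
-/

def AltSimAt {S T A : Type} (I O : Set A) (trP : S → Lbl A → S → Prop)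
    (trQ : T → Lbl A → T → Prop) (R : S → T → Prop) (p : S) (q : T) : Prop :=
  (∀ a q', a ∈ I → trQ q (some a) q' → ∃ p', trP p (some a) p' ∧ R p' q') ∧
  (∀ a p', a ∈ O → trP p (some a) p' → ∃ q', WeakTr trQ q (some a) q' ∧ R p' q') ∧
  (∀ p', trP p none p' → ∃ q', WeakEps trQ q q' ∧ R p' q')

theorem isAltSim_iff {S T A : Type} {I O : Set A} {trP : S → Lbl A → S → Prop}
    {trQ : T → Lbl A → T → Prop} {R : S → T → Prop} :
    IsAltSim I O trP trQ R ↔ ∀ p q, R p q → AltSimAt I O trP trQ R p q :=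
  Iff.rfl

theorem WeakEps.lift {S S' A A' : Type} {tr : S → Lbl A → S → Prop}
    {tr' : S' → Lbl A' → S' → Prop} (f : S → S')
    (hf : ∀ s s', tr s none s' → tr' (f s) none (f s')) {s s' : S} (h : WeakEps tr s s') :
    WeakEps tr' (f s) (f s') :=
  Relation.ReflTransGen.lift f hf _ _ h

theorem WeakTr.of_tr {S A : Type} {tr : S → Lbl A → S → Prop} {s s' : S} {α : Lbl A}
    (h : tr s α s') : WeakTr tr s α s' :=
  ⟨s, Relation.ReflTransGen.refl, h⟩

namespace ConjTr

variable {A S U : Type} {I O : Set A} {trP : S → Lbl A → S → Prop}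
  {trR : U → Lbl A → U → Prop}

theorem weakEps_left {p p' : S} (h : WeakEps trP p p') :
    WeakEps (ConjTr I O trP trR) (.left p) (.left p') :=
  h.lift _ fun _ _ => fromP

theorem weakTr_left {p p' : S} {α : Lbl A} (h : WeakTr trP p α p') :
    WeakTr (ConjTr I O trP trR) (.left p) α (.left p') :=
  let ⟨_, hε, hstep⟩ := h
  ⟨_, weakEps_left hε, fromP hstep⟩

theorem weakEps_comb {p p' : S} (r : U) (h : WeakEps trP p p') :
    WeakEps (ConjTr I O trP trR) (.comb p r) (.comb p' r) :=
  h.lift _ fun _ _ => t1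

theorem weakTr_comb_out {p p' : S} {r r' : U} {a : A} (ha : a ∈ O)
    (hp : WeakTr trP p (some a) p') (hr : trR r (some a) r') :
    WeakTr (ConjTr I O trP trR) (.comb p r) (some a) (.comb p' r') :=
  let ⟨_, hε, hstep⟩ := hp
  ⟨_, weakEps_comb r hε, out ha hstep hr⟩

theorem exists_of_comb_output (hIO : Disjoint I O) {p : S} {r : U} {a : A} {x : CState S U}
    (ha : a ∈ O) (h : ConjTr I O trP trR (.comb p r) (some a) x) :
    ∃ p' r', trP p (some a) p' ∧ trR r (some a) r' ∧ x = .comb p' r' := by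
  cases h with
  | i1 haI | i2 haI | i3 haI => exact absurd ha (Set.disjoint_left.mp hIO haI)
  | out _ hp hr => exact ⟨_, _, hp, hr, rfl⟩

end ConjTr

inductive ConjRel {S T U : Type} (R : S → T → Prop) : CState S U → CState T U → Prop
  | comb {p q r} : R p q → ConjRel R (.comb p r) (.comb q r)
  | left {p q} : R p q → ConjRel R (.left p) (.left q)
  | right {r} : ConjRel R (.right r) (.right r)
  | combRight {p r} : ConjRel R (.comb p r) (.right r)

namespace ConjRel

variable {A S T U : Type} {I O : Set A} {trP : S → Lbl A → S → Prop}
  {trQ : T → Lbl A → T → Prop} {trR : U → Lbl A → U → Prop} {R : S → T → Prop}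

theorem exists_conjTr_input {p : S} {r r' : U} {a : A} (ha : a ∈ I)
    (hr : trR r (some a) r') :
    ∃ x, ConjTr I O trP trR (.comb p r) (some a) x ∧ ConjRel R x (.right r') := by
  by_cases hp : ∃ p', trP p (some a) p'
  · obtain ⟨p', hp'⟩ := hp
    exact ⟨_, .i3 ha hp' hr, .combRight⟩
  · exact ⟨_, .i2 ha hp hr, .right⟩

theorem altSimAt_right (r : U) :
    AltSimAt I O (ConjTr I O trP trR) (ConjTr I O trQ trR) (ConjRel R) (.right r) (.right r) := by
  refine ⟨?_, ?_, ?_⟩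
  · intro a y _ hy
    cases hy with | fromQ hr => exact ⟨_, .fromQ hr, .right⟩
  · intro a x _ hx
    cases hx with | fromQ hr => exact ⟨_, .of_tr (.fromQ hr), .right⟩
  · intro x hx
    cases hx with | fromQ hr => exact ⟨_, .single (.fromQ hr), .right⟩

theorem altSimAt_combRight (hIO : Disjoint I O) (p : S) (r : U) :
    AltSimAt I O (ConjTr I O trP trR) (ConjTr I O trQ trR) (ConjRel R) (.comb p r) (.right r) := by
  refine ⟨?_, ?_, ?_⟩
  · intro a y ha hy
    cases hy with | fromQ hr => exact exists_conjTr_input ha hr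
  · intro a x ha hx
    obtain ⟨p', r', -, hr, rfl⟩ := ConjTr.exists_of_comb_output hIO ha hx
    exact ⟨_, .of_tr (.fromQ hr), .combRight⟩
  · intro x hx
    cases hx with
    | t1 => exact ⟨_, .refl, .combRight⟩
    | t2 hr => exact ⟨_, .single (.fromQ hr), .combRight⟩

theorem altSimAt_left {p : S} {q : T} (h : AltSimAt I O trP trQ R p q) :
    AltSimAt I O (ConjTr I O trP trR) (ConjTr I O trQ trR) (ConjRel R) (.left p) (.left q) := by
  obtain ⟨hin, hout, hτ⟩ := h
  refine ⟨?_, ?_, ?_⟩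
  · rintro a _ ha ⟨hq⟩
    obtain ⟨p', hp, hR⟩ := hin a _ ha hq
    exact ⟨_, .fromP hp, .left hR⟩
  · rintro a _ ha ⟨hp⟩
    obtain ⟨q', hq, hR⟩ := hout a _ ha hp
    exact ⟨_, ConjTr.weakTr_left hq, .left hR⟩
  · rintro _ ⟨hp⟩
    obtain ⟨q', hq, hR⟩ := hτ _ hp
    exact ⟨_, ConjTr.weakEps_left hq, .left hR⟩

theorem altSimAt_comb (hIO : Disjoint I O) {p : S} {q : T} (r : U) (hpq : R p q)
    (h : AltSimAt I O trP trQ R p q) :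
    AltSimAt I O (ConjTr I O trP trR) (ConjTr I O trQ trR) (ConjRel R) (.comb p r) (.comb q r) := by
  obtain ⟨hin, hout, hτ⟩ := h
  refine ⟨?_, ?_, ?_⟩
  · intro a y ha hy
    cases hy with
    | i1 _ hq hr =>
      obtain ⟨p', hp, hR⟩ := hin a _ ha hq
      exact ⟨_, .i1 ha hp hr, .left hR⟩
    | i2 _ _ hr => exact exists_conjTr_input ha hr
    | i3 _ hq hr | out _ hq hr =>
      obtain ⟨p', hp, hR⟩ := hin a _ ha hq
      exact ⟨_, .i3 ha hp hr, .comb hR⟩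
  · intro a x ha hx
    obtain ⟨p', r', hp, hr, rfl⟩ := ConjTr.exists_of_comb_output hIO ha hx
    obtain ⟨q', hq, hR⟩ := hout a _ ha hp
    exact ⟨_, ConjTr.weakTr_comb_out ha hq hr, .comb hR⟩
  · intro x hx
    cases hx with
    | t1 hp =>
      obtain ⟨q', hq, hR⟩ := hτ _ hp
      exact ⟨_, ConjTr.weakEps_comb r hq, .comb hR⟩
    | t2 hr => exact ⟨_, .single (.t2 hr), .comb hpq⟩

end ConjRel

theorem ia_conj_compositional_general {A S T U : Type} (I O : Set A)
    (trP : S → Lbl A → S → Prop) (trQ : T → Lbl A → T → Prop)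
    (trR : U → Lbl A → U → Prop)
    (hP : IsIA I O trP)
    (p : S) (q : T) (r : U)
    (h : IARef I O trP trQ p q) :
    IARef I O (ConjTr I O trP trR) (ConjTr I O trQ trR)
      (CState.comb p r) (CState.comb q r) := by
  obtain ⟨R, hsim, hpq⟩ := h
  refine ⟨ConjRel R, isAltSim_iff.mpr fun x y hxy => ?_, .comb hpq⟩
  cases hxy with
  | comb h => exact ConjRel.altSimAt_comb hP.1 _ h (hsim _ _ h)
  | left h => exact ConjRel.altSimAt_left (hsim _ _ h)
  | right => exact ConjRel.altSimAt_right _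
  | combRight => exact ConjRel.altSimAt_combRight hP.1 _ _

/-- Corollary 2.4: IA-refinement is compositional w.r.t. IA-conjunction. -/
theorem ia_conj_compositional {A S T U : Type} (I O : Set A)
    (trP : S → Lbl A → S → Prop) (trQ : T → Lbl A → T → Prop)
    (trR : U → Lbl A → U → Prop)
    (hP : IsIA I O trP) (hQ : IsIA I O trQ) (hR : IsIA I O trR)
    (p : S) (q : T) (r : U)
    (h : IARef I O trP trQ p q) :
    IARef I O (ConjTr I O trP trR) (ConjTr I O trQ trR)
      (CState.comb p r) (CState.comb q r) :=
  ia_conj_compositional_general I O trP trQ trR hP p q r h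
end

section
/- (Theorem 2.6, '∨ is Or' for IA) Let P, Q, R be Interface Automata with common input alphabet I and common output alphabet O, with p a state of P, q a state of Q, and r a state of R. Then p ∨ q ⊑_IA r if and only if p ⊑_IA r and q ⊑_IA r, where p ∨ q is the state of the IA-disjunction P ∨ Q corresponding to the pair (p,q). In other words, the disjunction operator ∨ on IA yields the least upper bound with respect to IA-refinement. -/
/-- Transition relation of the IA-disjunction `P ∨ Q` (rules (I), (OT1), (OT2)),
on the states `{p ∨ q | p ∈ P, q ∈ Q} ∪ P ∪ Q`. -/
inductive DisjTr {S T A : Type} (I O : Set A) (trP : S → Lbl A → S → Prop)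
    (trQ : T → Lbl A → T → Prop) : CState S T → Lbl A → CState S T → Prop
  | fromP {p α p'} : trP p α p' → DisjTr I O trP trQ (CState.left p) α (CState.left p')
  | fromQ {q α q'} : trQ q α q' → DisjTr I O trP trQ (CState.right q) α (CState.right q')
  | inp {p q a p' q'} : a ∈ I → trP p (some a) p' → trQ q (some a) q' →
      DisjTr I O trP trQ (CState.comb p q) (some a) (CState.comb p' q')
  | ot1 {p q a p'} : a ∈ O → trP p (some a) p' →
      DisjTr I O trP trQ (CState.comb p q) (some a) (CState.left p')
  | ot1tau {p q p'} : trP p none p' →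
      DisjTr I O trP trQ (CState.comb p q) none (CState.left p')
  | ot2 {p q a q'} : a ∈ O → trQ q (some a) q' →
      DisjTr I O trP trQ (CState.comb p q) (some a) (CState.right q')
  | ot2tau {p q q'} : trQ q none q' →
      DisjTr I O trP trQ (CState.comb p q) none (CState.right q')

/-- Theorem 2.6 (`∨` is Or): IA-disjunction is the least upper bound
with respect to IA-refinement. -/
theorem ia_disj_is_or {A S T U : Type} (I O : Set A)
    (trP : S → Lbl A → S → Prop) (trQ : T → Lbl A → T → Prop)
    (trR : U → Lbl A → U → Prop)
    (hP : IsIA I O trP) (hQ : IsIA I O trQ) (hR : IsIA I O trR)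
    (p : S) (q : T) (r : U) :
    IARef I O (DisjTr I O trP trQ) trR (CState.comb p q) r ↔
      (IARef I O trP trR p r ∧ IARef I O trQ trR q r) := by
  constructor
  · rintro ⟨R, hsim, hpq⟩
    have hdisj : Disjoint I O := hP.1
    constructor
    · refine ⟨fun p r => (∃ q, R (CState.comb p q) r) ∨ R (CState.left p) r, ?_, Or.inl ⟨q, hpq⟩⟩
      intro p r hpr
      refine ⟨?_, ?_, ?_⟩
      · intro a r' ha htr
        rcases hpr with ⟨q, hc⟩ | hl
        · obtain ⟨s', hs', hRs'⟩ := (hsim _ _ hc).1 a r' ha htr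
          cases hs' with
          | inp _ hp' _ => exact ⟨_, by assumption, Or.inl ⟨_, hRs'⟩⟩
          | ot1 hO _ => exact absurd hO (Set.disjoint_left.mp hdisj ha)
          | ot2 hO _ => exact absurd hO (Set.disjoint_left.mp hdisj ha)
        · obtain ⟨s', hs', hRs'⟩ := (hsim _ _ hl).1 a r' ha htr
          cases hs' with
          | fromP h => exact ⟨_, h, Or.inr hRs'⟩
      · intro a p' ha htr
        rcases hpr with ⟨q, hc⟩ | hl
        · obtain ⟨r', hr', hRr'⟩ := (hsim _ _ hc).2.1 a _ ha (DisjTr.ot1 ha htr)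
          exact ⟨r', hr', Or.inr hRr'⟩
        · obtain ⟨r', hr', hRr'⟩ := (hsim _ _ hl).2.1 a _ ha (DisjTr.fromP htr)
          exact ⟨r', hr', Or.inr hRr'⟩
      · intro p' htr
        rcases hpr with ⟨q, hc⟩ | hl
        · obtain ⟨r', hr', hRr'⟩ := (hsim _ _ hc).2.2 _ (DisjTr.ot1tau htr)
          exact ⟨r', hr', Or.inr hRr'⟩
        · obtain ⟨r', hr', hRr'⟩ := (hsim _ _ hl).2.2 _ (DisjTr.fromP htr)
          exact ⟨r', hr', Or.inr hRr'⟩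
    · refine ⟨fun q r => (∃ p, R (CState.comb p q) r) ∨ R (CState.right q) r, ?_, Or.inl ⟨p, hpq⟩⟩
      intro q r hqr
      refine ⟨?_, ?_, ?_⟩
      · intro a r' ha htr
        rcases hqr with ⟨p, hc⟩ | hl
        · obtain ⟨s', hs', hRs'⟩ := (hsim _ _ hc).1 a r' ha htr
          cases hs' with
          | inp _ _ hq' => exact ⟨_, by assumption, Or.inl ⟨_, hRs'⟩⟩
          | ot1 hO _ => exact absurd hO (Set.disjoint_left.mp hdisj ha)
          | ot2 hO _ => exact absurd hO (Set.disjoint_left.mp hdisj ha)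
        · obtain ⟨s', hs', hRs'⟩ := (hsim _ _ hl).1 a r' ha htr
          cases hs' with
          | fromQ h => exact ⟨_, h, Or.inr hRs'⟩
      · intro a q' ha htr
        rcases hqr with ⟨p, hc⟩ | hl
        · obtain ⟨r', hr', hRr'⟩ := (hsim _ _ hc).2.1 a _ ha (DisjTr.ot2 ha htr)
          exact ⟨r', hr', Or.inr hRr'⟩
        · obtain ⟨r', hr', hRr'⟩ := (hsim _ _ hl).2.1 a _ ha (DisjTr.fromQ htr)
          exact ⟨r', hr', Or.inr hRr'⟩
      · intro q' htr
        rcases hqr with ⟨p, hc⟩ | hl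
        · obtain ⟨r', hr', hRr'⟩ := (hsim _ _ hc).2.2 _ (DisjTr.ot2tau htr)
          exact ⟨r', hr', Or.inr hRr'⟩
        · obtain ⟨r', hr', hRr'⟩ := (hsim _ _ hl).2.2 _ (DisjTr.fromQ htr)
          exact ⟨r', hr', Or.inr hRr'⟩
  · rintro ⟨⟨R1, hsim1, h1⟩, ⟨R2, hsim2, h2⟩⟩
    have hdisj : Disjoint I O := hP.1
    refine ⟨fun s r => match s with
      | CState.left p => R1 p r
      | CState.right q => R2 q r
      | CState.comb p q => R1 p r ∧ R2 q r, ?_, h1, h2⟩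
    intro s r hs
    match s, hs with
    | CState.left p, h =>
      refine ⟨?_, ?_, ?_⟩
      · intro a r' ha htr
        obtain ⟨p', hp', hR⟩ := (hsim1 _ _ h).1 a r' ha htr
        exact ⟨_, DisjTr.fromP hp', hR⟩
      · rintro a s' ha htr
        cases htr with
        | fromP hp' =>
          obtain ⟨r', hr', hR⟩ := (hsim1 _ _ h).2.1 a _ ha hp'
          exact ⟨r', hr', hR⟩
      · rintro s' htr
        cases htr with
        | fromP hp' =>
          obtain ⟨r', hr', hR⟩ := (hsim1 _ _ h).2.2 _ hp'
          exact ⟨r', hr', hR⟩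
    | CState.right q, h =>
      refine ⟨?_, ?_, ?_⟩
      · intro a r' ha htr
        obtain ⟨q', hq', hR⟩ := (hsim2 _ _ h).1 a r' ha htr
        exact ⟨_, DisjTr.fromQ hq', hR⟩
      · rintro a s' ha htr
        cases htr with
        | fromQ hq' =>
          obtain ⟨r', hr', hR⟩ := (hsim2 _ _ h).2.1 a _ ha hq'
          exact ⟨r', hr', hR⟩
      · rintro s' htr
        cases htr with
        | fromQ hq' =>
          obtain ⟨r', hr', hR⟩ := (hsim2 _ _ h).2.2 _ hq'
          exact ⟨r', hr', hR⟩
    | CState.comb p q, ⟨hp, hq⟩ =>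
      refine ⟨?_, ?_, ?_⟩
      · intro a r' ha htr
        obtain ⟨p', hp', hR1⟩ := (hsim1 _ _ hp).1 a r' ha htr
        obtain ⟨q', hq', hR2⟩ := (hsim2 _ _ hq).1 a r' ha htr
        exact ⟨_, DisjTr.inp ha hp' hq', hR1, hR2⟩
      · rintro a s' ha htr
        cases htr with
        | inp hI _ _ => exact absurd ha (Set.disjoint_left.mp hdisj hI)
        | ot1 _ hp' =>
          obtain ⟨r', hr', hR⟩ := (hsim1 _ _ hp).2.1 a _ ha hp'
          exact ⟨r', hr', hR⟩
        | ot2 _ hq' =>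
          obtain ⟨r', hr', hR⟩ := (hsim2 _ _ hq).2.1 a _ ha hq'
          exact ⟨r', hr', hR⟩
      · rintro s' htr
        cases htr with
        | ot1tau hp' =>
          obtain ⟨r', hr', hR⟩ := (hsim1 _ _ hp).2.2 _ hp'
          exact ⟨r', hr', hR⟩
        | ot2tau hq' =>
          obtain ⟨r', hr', hR⟩ := (hsim2 _ _ hq).2.2 _ hq'
          exact ⟨r', hr', hR⟩
end

section
/- (Corollary 2.7) IA-refinement is compositional with respect to IA-disjunction: for Interface Automata P, Q, R with common input and output alphabets and states p, q, r respectively, p ⊑_IA q implies p ∨ r ⊑_IA q ∨ r. -/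
/-!
Let `R` be an alternating simulation witnessing `p ⊑_IA q`. Relate `p' ∨ r'` to `q' ∨ r'` and the
`P`-copy `p'` to the `Q`-copy `q'` whenever `R p' q'`, and each state of the `R`-copy to itself.
Inputs of `q ∨ r` are joint steps of `q` and `r`, so `R` supplies the matching step of `p`.
An output or τ-step of `p ∨ r` by (OT2) is copied verbatim; one by (OT1) is matched as in
`p ⊑_IA q`, the first τ-step of the matching weak transition of `q ∨ r` committing to `Q`.
If that weak transition is empty, `p ∨ r` has moved to the `P`-copy while `q ∨ r` has not moved,
so `P`-copy states must also be related to combined states. Disjointness of `I` and `O` keeps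
inputs and outputs of combined states apart.
-/

section Disjunction

variable {A S T U : Type} {I O : Set A}
  {trP : S → Lbl A → S → Prop} {trQ : T → Lbl A → T → Prop} {trR : U → Lbl A → U → Prop}

namespace DisjTr

theorem weakEps_left {p p' : S} (h : WeakEps trP p p') :
    WeakEps (DisjTr I O trP trQ) (.left p) (.left p') :=
  Relation.ReflTransGen.lift CState.left (fun _ _ => fromP) _ _ h

theorem weakTr_left {p p' : S} {α : Lbl A} (h : WeakTr trP p α p') :
    WeakTr (DisjTr I O trP trQ) (.left p) α (.left p') :=
  let ⟨_, heps, hstep⟩ := h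
  ⟨_, weakEps_left heps, fromP hstep⟩

theorem eq_or_weakEps_comb {p p' : S} (q : T) (h : WeakEps trP p p') :
    p = p' ∨ WeakEps (DisjTr I O trP trQ) (.comb p q) (.left p') := by
  rcases h.cases_head with rfl | ⟨_, hstep, hrest⟩
  · exact .inl rfl
  · exact .inr (.head (ot1tau hstep) (weakEps_left hrest))

theorem weakTr_comb {p p' : S} {a : A} (q : T) (ha : a ∈ O) (h : WeakTr trP p (some a) p') :
    WeakTr (DisjTr I O trP trQ) (.comb p q) (some a) (.left p') := by
  obtain ⟨_, heps, hstep⟩ := h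
  rcases eq_or_weakEps_comb q heps with rfl | heps'
  · exact ⟨_, .refl, ot1 ha hstep⟩
  · exact ⟨_, heps', fromP hstep⟩

end DisjTr

inductive DisjRel (R : S → T → Prop) : CState S U → CState T U → Prop
  | left {p q} : R p q → DisjRel R (.left p) (.left q)
  | right {r} : DisjRel R (.right r) (.right r)
  | comb {p q r} : R p q → DisjRel R (.comb p r) (.comb q r)
  | left_comb {p q r} : R p q → DisjRel R (.left p) (.comb q r)

namespace DisjRel

variable {R : S → T → Prop} {p p' : S} {q : T}

theorem exists_weakTr_comb (hsim : IsAltSim I O trP trQ R) (hpq : R p q) {a : A} (ha : a ∈ O)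
    (hp : trP p (some a) p') (r : U) :
    ∃ t', WeakTr (DisjTr I O trQ trR) (.comb q r) (some a) t' ∧ DisjRel R (.left p') t' :=
  let ⟨_, hq, hR⟩ := (hsim p q hpq).2.1 a p' ha hp
  ⟨_, DisjTr.weakTr_comb r ha hq, .left hR⟩

theorem exists_weakEps_comb (hsim : IsAltSim I O trP trQ R) (hpq : R p q)
    (hp : trP p none p') (r : U) :
    ∃ t', WeakEps (DisjTr I O trQ trR) (.comb q r) t' ∧ DisjRel R (.left p') t' := by
  obtain ⟨_, hq, hR⟩ := (hsim p q hpq).2.2 p' hp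
  rcases DisjTr.eq_or_weakEps_comb r hq with rfl | hq'
  · exact ⟨_, .refl, .left_comb hR⟩
  · exact ⟨_, hq', .left hR⟩

variable {s : CState S U} {t : CState T U}

theorem exists_input (hIO : Disjoint I O) (hsim : IsAltSim I O trP trQ R) (hst : DisjRel R s t)
    {a : A} {t' : CState T U} (ha : a ∈ I) (ht : DisjTr I O trQ trR t (some a) t') :
    ∃ s', DisjTr I O trP trR s (some a) s' ∧ DisjRel R s' t' := by
  have hO : a ∉ O := hIO.notMem_of_mem_left ha
  cases hst with
  | left hpq =>
    cases ht with
    | fromP hq =>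
      obtain ⟨_, hp, hR⟩ := (hsim _ _ hpq).1 a _ ha hq
      exact ⟨_, .fromP hp, .left hR⟩
  | right =>
    cases ht with
    | fromQ hr => exact ⟨_, .fromQ hr, .right⟩
  | comb hpq =>
    cases ht with
    | inp _ hq hr =>
      obtain ⟨_, hp, hR⟩ := (hsim _ _ hpq).1 a _ ha hq
      exact ⟨_, .inp ha hp hr, .comb hR⟩
    | ot1 ha' _ | ot2 ha' _ => exact absurd ha' hO
  | left_comb hpq =>
    cases ht with
    | inp _ hq _ =>
      obtain ⟨_, hp, hR⟩ := (hsim _ _ hpq).1 a _ ha hq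
      exact ⟨_, .fromP hp, .left_comb hR⟩
    | ot1 ha' _ | ot2 ha' _ => exact absurd ha' hO

theorem exists_output (hIO : Disjoint I O) (hsim : IsAltSim I O trP trQ R) (hst : DisjRel R s t)
    {a : A} {s' : CState S U} (ha : a ∈ O) (hs : DisjTr I O trP trR s (some a) s') :
    ∃ t', WeakTr (DisjTr I O trQ trR) t (some a) t' ∧ DisjRel R s' t' := by
  cases hst with
  | left hpq =>
    cases hs with
    | fromP hp =>
      obtain ⟨_, hq, hR⟩ := (hsim _ _ hpq).2.1 a _ ha hp
      exact ⟨_, DisjTr.weakTr_left hq, .left hR⟩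
  | right =>
    cases hs with
    | fromQ hr => exact ⟨_, ⟨_, .refl, .fromQ hr⟩, .right⟩
  | comb hpq =>
    cases hs with
    | inp ha' _ _ => exact absurd ha (hIO.notMem_of_mem_left ha')
    | ot1 _ hp => exact exists_weakTr_comb hsim hpq ha hp _
    | ot2 _ hr => exact ⟨_, ⟨_, .refl, .ot2 ha hr⟩, .right⟩
  | left_comb hpq =>
    cases hs with
    | fromP hp => exact exists_weakTr_comb hsim hpq ha hp _

theorem exists_tau (hsim : IsAltSim I O trP trQ R) (hst : DisjRel R s t) {s' : CState S U}
    (hs : DisjTr I O trP trR s none s') :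
    ∃ t', WeakEps (DisjTr I O trQ trR) t t' ∧ DisjRel R s' t' := by
  cases hst with
  | left hpq =>
    cases hs with
    | fromP hp =>
      obtain ⟨_, hq, hR⟩ := (hsim _ _ hpq).2.2 _ hp
      exact ⟨_, DisjTr.weakEps_left hq, .left hR⟩
  | right =>
    cases hs with
    | fromQ hr => exact ⟨_, .single (.fromQ hr), .right⟩
  | comb hpq =>
    cases hs with
    | ot1tau hp => exact exists_weakEps_comb hsim hpq hp _
    | ot2tau hr => exact ⟨_, .single (.ot2tau hr), .right⟩
  | left_comb hpq =>
    cases hs with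
    | fromP hp => exact exists_weakEps_comb hsim hpq hp _

theorem isAltSim (hIO : Disjoint I O) (hsim : IsAltSim I O trP trQ R) :
    IsAltSim I O (DisjTr I O trP trR) (DisjTr I O trQ trR) (DisjRel R) :=
  fun _ _ hst =>
    ⟨fun _ _ ha ht => exists_input hIO hsim hst ha ht,
     fun _ _ ha hs => exists_output hIO hsim hst ha hs,
     fun _ hs => exists_tau hsim hst hs⟩

end DisjRel

end Disjunction

theorem ia_disj_compositional_general {A S T U : Type} (I O : Set A)
    (trP : S → Lbl A → S → Prop) (trQ : T → Lbl A → T → Prop)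
    (trR : U → Lbl A → U → Prop)
    (hP : IsIA I O trP)
    (p : S) (q : T) (r : U)
    (h : IARef I O trP trQ p q) :
    IARef I O (DisjTr I O trP trR) (DisjTr I O trQ trR)
      (CState.comb p r) (CState.comb q r) := by
  obtain ⟨R, hsim, hpq⟩ := h
  exact ⟨DisjRel R, DisjRel.isAltSim hP.1 hsim, .comb hpq⟩

/-- Corollary 2.7: IA-refinement is compositional w.r.t. IA-disjunction. -/
theorem ia_disj_compositional {A S T U : Type} (I O : Set A)
    (trP : S → Lbl A → S → Prop) (trQ : T → Lbl A → T → Prop)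
    (trR : U → Lbl A → U → Prop)
    (hP : IsIA I O trP) (hQ : IsIA I O trQ) (hR : IsIA I O trR)
    (p : S) (q : T) (r : U)
    (h : IARef I O trP trQ p q) :
    IARef I O (DisjTr I O trP trR) (DisjTr I O trQ trR)
      (CState.comb p r) (CState.comb q r) :=
  ia_disj_compositional_general I O trP trQ trR hP p q r h
end

section
/- (Theorem 2.10, Compositionality of IA-Parallel Composition) Let P₁, P₂ and Q₁ be Interface Automata with states p₁ ∈ P₁, p₂ ∈ P₂, q₁ ∈ Q₁ such that p₁ ⊑_IA q₁ (in particular P₁ and Q₁ have the same input and output alphabets). Assume Q₁ and P₂ are composable. Then: (a) P₁ and P₂ are composable; and (b) if q₁ and p₂ are compatible, then p₁ and p₂ are compatible and p₁ | p₂ ⊑_IA q₁ | p₂. -/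
/-- Composability of alphabets: each common action is input of one side and output
of the other, i.e. A₁ ∩ A₂ = (I₁ ∩ O₂) ∪ (O₁ ∩ I₂). -/
def Composable {A : Type} (I1 O1 I2 O2 : Set A) : Prop :=
  (I1 ∪ O1) ∩ (I2 ∪ O2) = (I1 ∩ O2) ∪ (O1 ∩ I2)

/-- Transitions of the IA parallel product `P₁ ⊗ P₂` (rules (Par1)-(Par3));
`A1`, `A2` are the alphabets of the components. -/
inductive ParTr {S1 S2 A : Type} (A1 A2 : Set A) (tr1 : S1 → Lbl A → S1 → Prop)
    (tr2 : S2 → Lbl A → S2 → Prop) : S1 × S2 → Lbl A → S1 × S2 → Prop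
  | par1 {p1 p2 α p1'} : tr1 p1 α p1' → (∀ x, α = some x → x ∉ A2) →
      ParTr A1 A2 tr1 tr2 (p1, p2) α (p1', p2)
  | par2 {p1 p2 α p2'} : tr2 p2 α p2' → (∀ x, α = some x → x ∉ A1) →
      ParTr A1 A2 tr1 tr2 (p1, p2) α (p1, p2')
  | par3 {p1 p2 a p1' p2'} : tr1 p1 (some a) p1' → tr2 p2 (some a) p2' →
      ParTr A1 A2 tr1 tr2 (p1, p2) none (p1', p2')

/-- Error states of the IA parallel product. -/
def IsErrorIA {S1 S2 A : Type} (I1 O1 I2 O2 : Set A) (tr1 : S1 → Lbl A → S1 → Prop)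
    (tr2 : S2 → Lbl A → S2 → Prop) (s : S1 × S2) : Prop :=
  ∃ a, a ∈ (I1 ∪ O1) ∩ (I2 ∪ O2) ∧
    ((a ∈ O1 ∧ (∃ p', tr1 s.1 (some a) p') ∧ ¬ (∃ p', tr2 s.2 (some a) p')) ∨
     (a ∈ O2 ∧ (∃ p', tr2 s.2 (some a) p') ∧ ¬ (∃ p', tr1 s.1 (some a) p')))

/-- Incompatible states of the IA parallel product: the least set containing all
error states and closed backwards under output- or τ-transitions of the product. -/
inductive IAIncompat {S1 S2 A : Type} (I1 O1 I2 O2 : Set A) (tr1 : S1 → Lbl A → S1 → Prop)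
    (tr2 : S2 → Lbl A → S2 → Prop) : S1 × S2 → Prop
  | err {s} : IsErrorIA I1 O1 I2 O2 tr1 tr2 s → IAIncompat I1 O1 I2 O2 tr1 tr2 s
  | stepTau {s s'} : ParTr (I1 ∪ O1) (I2 ∪ O2) tr1 tr2 s none s' →
      IAIncompat I1 O1 I2 O2 tr1 tr2 s' → IAIncompat I1 O1 I2 O2 tr1 tr2 s
  | stepOut {s a s'} : a ∈ (O1 ∪ O2) \ (I1 ∪ I2) →
      ParTr (I1 ∪ O1) (I2 ∪ O2) tr1 tr2 s (some a) s' →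
      IAIncompat I1 O1 I2 O2 tr1 tr2 s' → IAIncompat I1 O1 I2 O2 tr1 tr2 s

/-- Transition relation of the IA parallel composition `P₁ | P₂`, obtained from
the product by pruning all incompatible states. -/
def IAParTr {S1 S2 A : Type} (I1 O1 I2 O2 : Set A) (tr1 : S1 → Lbl A → S1 → Prop)
    (tr2 : S2 → Lbl A → S2 → Prop) (s : S1 × S2) (α : Lbl A) (s' : S1 × S2) : Prop :=
  ParTr (I1 ∪ O1) (I2 ∪ O2) tr1 tr2 s α s' ∧
  ¬ IAIncompat I1 O1 I2 O2 tr1 tr2 s ∧ ¬ IAIncompat I1 O1 I2 O2 tr1 tr2 s'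

section Aux

variable {A S1 S2 T1 : Type} {I1 O1 I2 O2 : Set A}
  {trP1 : S1 → Lbl A → S1 → Prop} {trP2 : S2 → Lbl A → S2 → Prop}
  {trQ1 : T1 → Lbl A → T1 → Prop}

/-- Case analysis on shared actions under composability. -/
lemma shared_cases (hcomp : Composable I1 O1 I2 O2)
    (h1 : Disjoint I1 O1) (h2 : Disjoint I2 O2) {a : A}
    (h : a ∈ (I1 ∪ O1) ∩ (I2 ∪ O2)) :
    (a ∈ I1 ∧ a ∈ O2 ∧ a ∉ O1 ∧ a ∉ I2) ∨ (a ∈ O1 ∧ a ∈ I2 ∧ a ∉ I1 ∧ a ∉ O2) := by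
  rw [Composable] at hcomp
  rw [hcomp] at h
  rcases h with ⟨ha1, ha2⟩ | ⟨ha1, ha2⟩
  · exact Or.inl ⟨ha1, ha2, Set.disjoint_left.mp h1 ha1, fun hb => Set.disjoint_left.mp h2 hb ha2⟩
  · exact Or.inr ⟨ha1, ha2, fun hb => Set.disjoint_left.mp h1 hb ha1, Set.disjoint_left.mp h2 ha2⟩

/-- Incompatibility is closed backwards along τ-paths of `Q₁` (lifted to the product). -/
lemma incQ_back_eps {q q' : T1} (hw : WeakEps trQ1 q q') (p2 : S2)
    (h : IAIncompat I1 O1 I2 O2 trQ1 trP2 (q', p2)) :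
    IAIncompat I1 O1 I2 O2 trQ1 trP2 (q, p2) := by
  induction hw using Relation.ReflTransGen.head_induction_on with
  | refl => exact h
  | head hstep _ ih =>
      exact IAIncompat.stepTau (ParTr.par1 hstep (fun _ hx => nomatch hx)) ih

/-- Lift a τ-path of `Q₁` into the pruned composition, propagating compatibility. -/
lemma lift_eps {q q' : T1} (hw : WeakEps trQ1 q q') (p2 : S2) :
    ¬ IAIncompat I1 O1 I2 O2 trQ1 trP2 (q, p2) →
    WeakEps (IAParTr I1 O1 I2 O2 trQ1 trP2) (q, p2) (q', p2) ∧
      ¬ IAIncompat I1 O1 I2 O2 trQ1 trP2 (q', p2) := by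
  induction hw using Relation.ReflTransGen.head_induction_on with
  | refl => exact fun h => ⟨Relation.ReflTransGen.refl, h⟩
  | head hstep _ ih =>
      intro h
      have hmid := fun hc =>
        h (IAIncompat.stepTau (ParTr.par1 hstep (fun _ hx => nomatch hx)) hc)
      obtain ⟨hw', h'⟩ := ih hmid
      exact ⟨Relation.ReflTransGen.head
        ⟨ParTr.par1 hstep (fun _ hx => nomatch hx), h, hmid⟩ hw', h'⟩

/-- Key lemma: refinement reflects incompatibility. -/
lemma incompat_mono (hP1 : IsIA I1 O1 trP1) (hP2 : IsIA I2 O2 trP2)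
    (hcomp : Composable I1 O1 I2 O2) {R : S1 → T1 → Prop}
    (hsim : IsAltSim I1 O1 trP1 trQ1 R) :
    ∀ s, IAIncompat I1 O1 I2 O2 trP1 trP2 s →
      ∀ q1, R s.1 q1 → IAIncompat I1 O1 I2 O2 trQ1 trP2 (q1, s.2) := by
  intro s h
  induction h with
  | @err s herr =>
      intro q1 hR
      obtain ⟨a, hshared, hcase⟩ := herr
      rcases hcase with ⟨haO1, ⟨p1', hp1⟩, hnp2⟩ | ⟨haO2, hp2, hnp1⟩
      · obtain ⟨q', ⟨qm, hweps, hstep⟩, _⟩ := (hsim _ _ hR).2.1 a p1' haO1 hp1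
        exact incQ_back_eps hweps s.2
          (IAIncompat.err ⟨a, hshared, Or.inl ⟨haO1, ⟨q', hstep⟩, hnp2⟩⟩)
      · have haI1 : a ∈ I1 := by
          rcases shared_cases hcomp hP1.1 hP2.1 hshared with ⟨h1, _⟩ | ⟨_, _, _, h4⟩
          · exact h1
          · exact absurd haO2 h4
        refine IAIncompat.err ⟨a, hshared, Or.inr ⟨haO2, hp2, ?_⟩⟩
        rintro ⟨q1', hq⟩
        obtain ⟨p1', hp1, _⟩ := (hsim _ _ hR).1 a q1' haI1 hq
        exact hnp1 ⟨p1', hp1⟩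
  | @stepTau s s' hstep hinc ih =>
      intro q1 hR
      cases hstep with
      | @par1 pa pb _ pa' h1 _ =>
          obtain ⟨q1', hweps, hR'⟩ := (hsim _ _ hR).2.2 _ h1
          exact incQ_back_eps hweps _ (ih q1' hR')
      | par2 h2 _ =>
          exact IAIncompat.stepTau (ParTr.par2 h2 (fun _ hx => nomatch hx)) (ih q1 hR)
      | @par3 pa pb a pa' pb' hp1 hp2 =>
          have hsh : a ∈ (I1 ∪ O1) ∩ (I2 ∪ O2) :=
            ⟨hP1.2.1 _ _ _ hp1, hP2.2.1 _ _ _ hp2⟩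
          rcases shared_cases hcomp hP1.1 hP2.1 hsh with ⟨haI1, haO2, _, _⟩ | ⟨haO1, _, _, _⟩
          · by_cases hq : ∃ x, trQ1 q1 (some a) x
            · obtain ⟨q1', hq1⟩ := hq
              obtain ⟨p1'', hp1'', hR'⟩ := (hsim _ _ hR).1 a q1' haI1 hq1
              have heq : p1'' = pa' := hP1.2.2 _ a _ _ haI1 hp1'' hp1
              exact IAIncompat.stepTau (ParTr.par3 hq1 hp2) (ih q1' (heq ▸ hR'))
            · exact IAIncompat.err ⟨a, hsh, Or.inr ⟨haO2, ⟨pb', hp2⟩, hq⟩⟩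
          · obtain ⟨q1', ⟨qm, hweps, hqs⟩, hR'⟩ := (hsim _ _ hR).2.1 a _ haO1 hp1
            exact incQ_back_eps hweps _
              (IAIncompat.stepTau (ParTr.par3 hqs hp2) (ih q1' hR'))
  | @stepOut s a s' ha hstep hinc ih =>
      intro q1 hR
      cases hstep with
      | par1 h1 hna2 =>
          have haO1 : a ∈ O1 := by
            rcases hP1.2.1 _ _ _ h1 with h | h
            · exact absurd (Or.inl h) ha.2
            · exact h
          obtain ⟨q1', ⟨qm, hweps, hqs⟩, hR'⟩ := (hsim _ _ hR).2.1 a _ haO1 h1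
          exact incQ_back_eps hweps _
            (IAIncompat.stepOut ha (ParTr.par1 hqs hna2) (ih q1' hR'))
      | par2 h2 hna1 =>
          exact IAIncompat.stepOut ha (ParTr.par2 h2 hna1) (ih q1 hR)

end Aux

/-- Theorem 2.10: compositionality of IA-parallel composition. -/
theorem ia_par_compositional {A S1 S2 T1 : Type} (I1 O1 I2 O2 : Set A)
    (trP1 : S1 → Lbl A → S1 → Prop) (trP2 : S2 → Lbl A → S2 → Prop)
    (trQ1 : T1 → Lbl A → T1 → Prop)
    (hP1 : IsIA I1 O1 trP1) (hP2 : IsIA I2 O2 trP2) (hQ1 : IsIA I1 O1 trQ1)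
    (p1 : S1) (p2 : S2) (q1 : T1)
    (href : IARef I1 O1 trP1 trQ1 p1 q1)
    (hcomp : Composable I1 O1 I2 O2) :
    Composable I1 O1 I2 O2 ∧
      (¬ IAIncompat I1 O1 I2 O2 trQ1 trP2 (q1, p2) →
        ¬ IAIncompat I1 O1 I2 O2 trP1 trP2 (p1, p2) ∧
          IARef ((I1 ∪ I2) \ (O1 ∪ O2)) ((O1 ∪ O2) \ (I1 ∪ I2))
            (IAParTr I1 O1 I2 O2 trP1 trP2) (IAParTr I1 O1 I2 O2 trQ1 trP2)
            (p1, p2) (q1, p2)) := by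
  obtain ⟨R, hsim, hR0⟩ := href
  have key := incompat_mono hP1 hP2 hcomp hsim
  refine ⟨hcomp, fun hnincQ => ?_⟩
  have hnincP : ¬ IAIncompat I1 O1 I2 O2 trP1 trP2 (p1, p2) :=
    fun h => hnincQ (key _ h q1 hR0)
  refine ⟨hnincP, ?_⟩
  refine ⟨fun s t => R s.1 t.1 ∧ s.2 = t.2 ∧ ¬ IAIncompat I1 O1 I2 O2 trQ1 trP2 t,
    ?_, hR0, rfl, hnincQ⟩
  rintro ⟨pa, pb⟩ ⟨qa, qb⟩ ⟨hR, heq, hnq⟩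
  dsimp only at hR heq
  subst heq
  have hnp : ¬ IAIncompat I1 O1 I2 O2 trP1 trP2 (pa, pb) :=
    fun h => hnq (key _ h qa hR)
  refine ⟨?_, ?_, ?_⟩
  · -- inputs
    rintro a q' haI ⟨hstep, _, hn2⟩
    cases hstep with
    | par1 hq1 hna2 =>
        have haI1 : a ∈ I1 := by
          rcases hQ1.2.1 _ _ _ hq1 with h | h
          · exact h
          · exact absurd (Or.inl h) haI.2
        obtain ⟨p', hp', hR'⟩ := (hsim _ _ hR).1 a _ haI1 hq1
        have hnp' : ¬ IAIncompat I1 O1 I2 O2 trP1 trP2 (p', pb) :=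
          fun h => hn2 (key _ h _ hR')
        exact ⟨(p', pb), ⟨ParTr.par1 hp' hna2, hnp, hnp'⟩, hR', rfl, hn2⟩
    | par2 h2 hna1 =>
        have hnp' : ¬ IAIncompat I1 O1 I2 O2 trP1 trP2 (pa, _) :=
          fun h => hn2 (key _ h _ hR)
        exact ⟨(pa, _), ⟨ParTr.par2 h2 hna1, hnp, hnp'⟩, hR, rfl, hn2⟩
  · -- outputs
    rintro a p' haO ⟨hstep, _, _⟩
    cases hstep with
    | par1 hp1 hna2 =>
        have haO1 : a ∈ O1 := by
          rcases hP1.2.1 _ _ _ hp1 with h | h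
          · exact absurd (Or.inl h) haO.2
          · exact h
        obtain ⟨q', ⟨qm, hweps, hqs⟩, hR'⟩ := (hsim _ _ hR).2.1 a _ haO1 hp1
        obtain ⟨hweps', hnqm⟩ := lift_eps hweps pb hnq
        have hnq' : ¬ IAIncompat I1 O1 I2 O2 trQ1 trP2 (q', pb) :=
          fun h => hnqm (IAIncompat.stepOut haO (ParTr.par1 hqs hna2) h)
        exact ⟨(q', pb), ⟨(qm, pb), hweps', ParTr.par1 hqs hna2, hnqm, hnq'⟩, hR', rfl, hnq'⟩
    | par2 h2 hna1 =>
        have hnq' : ¬ IAIncompat I1 O1 I2 O2 trQ1 trP2 (qa, _) :=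
          fun h => hnq (IAIncompat.stepOut haO (ParTr.par2 h2 hna1) h)
        exact ⟨(qa, _), ⟨(qa, pb), Relation.ReflTransGen.refl,
          ParTr.par2 h2 hna1, hnq, hnq'⟩, hR, rfl, hnq'⟩
  · -- τ
    rintro p' ⟨hstep, _, _⟩
    cases hstep with
    | par1 h1 _ =>
        obtain ⟨q', hweps, hR'⟩ := (hsim _ _ hR).2.2 _ h1
        obtain ⟨hweps', hnq'⟩ := lift_eps hweps pb hnq
        exact ⟨(q', pb), hweps', hR', rfl, hnq'⟩
    | par2 h2 _ =>
        have hnq' : ¬ IAIncompat I1 O1 I2 O2 trQ1 trP2 (qa, _) :=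
          fun h => hnq (IAIncompat.stepTau (ParTr.par2 h2 (fun _ hx => nomatch hx)) h)
        exact ⟨(qa, _), Relation.ReflTransGen.single
          ⟨ParTr.par2 h2 (fun _ hx => nomatch hx), hnq, hnq'⟩, hR, rfl, hnq'⟩
    | @par3 _ _ a pa' pb' hp1 hp2 =>
        have hsh : a ∈ (I1 ∪ O1) ∩ (I2 ∪ O2) :=
          ⟨hP1.2.1 _ _ _ hp1, hP2.2.1 _ _ _ hp2⟩
        rcases shared_cases hcomp hP1.1 hP2.1 hsh with ⟨haI1, haO2, _, _⟩ | ⟨haO1, _, _, _⟩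
        · by_cases hq : ∃ x, trQ1 qa (some a) x
          · obtain ⟨q'', hq1⟩ := hq
            obtain ⟨p'', hp'', hR'⟩ := (hsim _ _ hR).1 a q'' haI1 hq1
            have heq : p'' = pa' := hP1.2.2 _ a _ _ haI1 hp'' hp1
            have hnq' : ¬ IAIncompat I1 O1 I2 O2 trQ1 trP2 (q'', pb') :=
              fun h => hnq (IAIncompat.stepTau (ParTr.par3 hq1 hp2) h)
            exact ⟨(q'', pb'), Relation.ReflTransGen.single
              ⟨ParTr.par3 hq1 hp2, hnq, hnq'⟩, heq ▸ hR', rfl, hnq'⟩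
          · exact absurd (IAIncompat.err ⟨a, hsh, Or.inr ⟨haO2, ⟨pb', hp2⟩, hq⟩⟩) hnq
        · obtain ⟨q'', ⟨qm, hweps, hqs⟩, hR'⟩ := (hsim _ _ hR).2.1 a _ haO1 hp1
          obtain ⟨hweps', hnqm⟩ := lift_eps hweps pb hnq
          have hnq' : ¬ IAIncompat I1 O1 I2 O2 trQ1 trP2 (q'', pb') :=
            fun h => hnqm (IAIncompat.stepTau (ParTr.par3 hqs hp2) h)
          exact ⟨(q'', pb'), Relation.ReflTransGen.tail hweps'
            ⟨ParTr.par3 hqs hp2, hnqm, hnq'⟩, hR', rfl, hnq'⟩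
end

section
/- (Theorem 3.5, '∧ is And' for dMTS) Let P, Q, R be disjunctive Modal Transition Systems with common alphabet, with states p ∈ P, q ∈ Q. Then: (i) there exists a state r of some dMTS R with r ⊑_dMTS p and r ⊑_dMTS q if and only if p ∧ q is defined (i.e., (p,q) is consistent in the conjunctive product P & Q); and (ii) if p ∧ q is defined, then for every state r of a dMTS: r ⊑_dMTS p and r ⊑_dMTS q if and only if r ⊑_dMTS p ∧ q. -/
/-- `(must, may)` is a disjunctive Modal Transition System: targets of
must-transitions are nonempty, and syntactic consistency holds. -/
def IsDMTS {S A : Type} (must : S → A → Set S → Prop) (may : S → Lbl A → S → Prop) : Prop :=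
  (∀ s a S', must s a S' → S'.Nonempty) ∧
  (∀ s a S' s', must s a S' → s' ∈ S' → may s (some a) s')

/-- Observational modal refinement relation between dMTSs. -/
def IsModalRef {S T A : Type} (mustP : S → A → Set S → Prop) (mayP : S → Lbl A → S → Prop)
    (mustQ : T → A → Set T → Prop) (mayQ : T → Lbl A → T → Prop) (R : S → T → Prop) : Prop :=
  ∀ p q, R p q →
    (∀ a Q', mustQ q a Q' → ∃ P', mustP p a P' ∧ ∀ p' ∈ P', ∃ q' ∈ Q', R p' q') ∧
    (∀ a p', mayP p (some a) p' → ∃ q', WeakTr mayQ q (some a) q' ∧ R p' q') ∧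
    (∀ p', mayP p none p' → ∃ q', WeakEps mayQ q q' ∧ R p' q')

/-- dMTS-refinement `p ⊑_dMTS q`. -/
def DMTSRef {S T A : Type} (mustP : S → A → Set S → Prop) (mayP : S → Lbl A → S → Prop)
    (mustQ : T → A → Set T → Prop) (mayQ : T → Lbl A → T → Prop) (p : S) (q : T) : Prop :=
  ∃ R, IsModalRef mustP mayP mustQ mayQ R ∧ R p q

/-- Must-transitions of the conjunctive product `P & Q` (rules (Must1), (Must2)). -/
inductive ConjMust {S T A : Type} (mustP : S → A → Set S → Prop) (mayP : S → Lbl A → S → Prop)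
    (mustQ : T → A → Set T → Prop) (mayQ : T → Lbl A → T → Prop) :
    S × T → A → Set (S × T) → Prop
  | must1 {p q a P'} : mustP p a P' → (∃ q', WeakTr mayQ q (some a) q') →
      ConjMust mustP mayP mustQ mayQ (p, q) a {x | x.1 ∈ P' ∧ WeakTr mayQ q (some a) x.2}
  | must2 {p q a Q'} : (∃ p', WeakTr mayP p (some a) p') → mustQ q a Q' →
      ConjMust mustP mayP mustQ mayQ (p, q) a {x | WeakTr mayP p (some a) x.1 ∧ x.2 ∈ Q'}

/-- May-transitions of the conjunctive product `P & Q` (rules (May1)-(May3)). -/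
inductive ConjMay {S T A : Type} (mayP : S → Lbl A → S → Prop) (mayQ : T → Lbl A → T → Prop) :
    S × T → Lbl A → S × T → Prop
  | may1 {p q p'} : WeakTr mayP p none p' → ConjMay mayP mayQ (p, q) none (p', q)
  | may2 {p q q'} : WeakTr mayQ q none q' → ConjMay mayP mayQ (p, q) none (p, q')
  | may3 {p q α p' q'} : WeakTr mayP p α p' → WeakTr mayQ q α q' →
      ConjMay mayP mayQ (p, q) α (p', q')

/-- The set `F` of logically inconsistent states of `P & Q` (rules (F1)-(F3)). -/
inductive Incons {S T A : Type} (mustP : S → A → Set S → Prop) (mayP : S → Lbl A → S → Prop)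
    (mustQ : T → A → Set T → Prop) (mayQ : T → Lbl A → T → Prop) : S × T → Prop
  | f1 {p q a P'} : mustP p a P' → ¬ (∃ q', WeakTr mayQ q (some a) q') →
      Incons mustP mayP mustQ mayQ (p, q)
  | f2 {p q a Q'} : ¬ (∃ p', WeakTr mayP p (some a) p') → mustQ q a Q' →
      Incons mustP mayP mustQ mayQ (p, q)
  | f3 {p q a R'} : ConjMust mustP mayP mustQ mayQ (p, q) a R' →
      (∀ x ∈ R', Incons mustP mayP mustQ mayQ x) → Incons mustP mayP mustQ mayQ (p, q)

/-- Must-transitions of the conjunction `P ∧ Q`: the product pruned of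
inconsistent states (which are also removed from targets). -/
def AndMust {S T A : Type} (mustP : S → A → Set S → Prop) (mayP : S → Lbl A → S → Prop)
    (mustQ : T → A → Set T → Prop) (mayQ : T → Lbl A → T → Prop)
    (s : S × T) (a : A) (R'' : Set (S × T)) : Prop :=
  ¬ Incons mustP mayP mustQ mayQ s ∧
  ∃ R', ConjMust mustP mayP mustQ mayQ s a R' ∧
    R'' = {x ∈ R' | ¬ Incons mustP mayP mustQ mayQ x}

/-- May-transitions of the conjunction `P ∧ Q`. -/
def AndMay {S T A : Type} (mustP : S → A → Set S → Prop) (mayP : S → Lbl A → S → Prop)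
    (mustQ : T → A → Set T → Prop) (mayQ : T → Lbl A → T → Prop)
    (s : S × T) (α : Lbl A) (s' : S × T) : Prop :=
  ¬ Incons mustP mayP mustQ mayQ s ∧ ¬ Incons mustP mayP mustQ mayQ s' ∧
  ConjMay mayP mayQ s α s'

section Aux

variable {A S T U : Type}

lemma weakTr_of_step {tr : S → Lbl A → S → Prop} {p : S} {α : Lbl A} {p' : S}
    (h : tr p α p') : WeakTr tr p α p' :=
  ⟨p, Relation.ReflTransGen.refl, h⟩

lemma weakEps_of_weakTr {tr : S → Lbl A → S → Prop} {p p' : S}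
    (h : WeakTr tr p none p') : WeakEps tr p p' := by
  obtain ⟨p'', he, hs⟩ := h
  exact he.tail hs

lemma weakTr_of_eps_tr {tr : S → Lbl A → S → Prop} {p p₁ : S} {α : Lbl A} {p' : S}
    (he : WeakEps tr p p₁) (h : WeakTr tr p₁ α p') : WeakTr tr p α p' := by
  obtain ⟨p'', he2, hs⟩ := h
  exact ⟨p'', he.trans he2, hs⟩

lemma weakEps_cases {tr : S → Lbl A → S → Prop} {p p' : S} (h : WeakEps tr p p') :
    p' = p ∨ WeakTr tr p none p' := by
  rcases h.cases_tail with h | ⟨c, hc, hstep⟩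
  · exact Or.inl h
  · exact Or.inr ⟨c, hc, hstep⟩

lemma ref_eps {mustP : S → A → Set S → Prop} {mayP : S → Lbl A → S → Prop}
    {mustQ : T → A → Set T → Prop} {mayQ : T → Lbl A → T → Prop} {R : S → T → Prop}
    (hR : IsModalRef mustP mayP mustQ mayQ R) {p p' : S} {q : T}
    (h : WeakEps mayP p p') (hpq : R p q) :
    ∃ q', WeakEps mayQ q q' ∧ R p' q' := by
  induction h with
  | refl => exact ⟨q, Relation.ReflTransGen.refl, hpq⟩
  | tail _ hstep ih =>
    obtain ⟨q₁, he, hr⟩ := ih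
    obtain ⟨q', he2, hr'⟩ := (hR _ _ hr).2.2 _ hstep
    exact ⟨q', he.trans he2, hr'⟩

lemma ref_weakTr {mustP : S → A → Set S → Prop} {mayP : S → Lbl A → S → Prop}
    {mustQ : T → A → Set T → Prop} {mayQ : T → Lbl A → T → Prop} {R : S → T → Prop}
    (hR : IsModalRef mustP mayP mustQ mayQ R) {p p' : S} {q : T} {a : A}
    (h : WeakTr mayP p (some a) p') (hpq : R p q) :
    ∃ q', WeakTr mayQ q (some a) q' ∧ R p' q' := by
  obtain ⟨p₁, he, hs⟩ := h
  obtain ⟨q₁, he1, hr1⟩ := ref_eps hR he hpq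
  obtain ⟨q', ht, hr⟩ := (hR _ _ hr1).2.1 _ _ hs
  exact ⟨q', weakTr_of_eps_tr he1 ht, hr⟩

lemma ref_weakNone {mustP : S → A → Set S → Prop} {mayP : S → Lbl A → S → Prop}
    {mustQ : T → A → Set T → Prop} {mayQ : T → Lbl A → T → Prop} {R : S → T → Prop}
    (hR : IsModalRef mustP mayP mustQ mayQ R) {p p' : S} {q : T}
    (h : WeakTr mayP p none p') (hpq : R p q) :
    ∃ q', WeakEps mayQ q q' ∧ R p' q' :=
  ref_eps hR (weakEps_of_weakTr h) hpq

/-- Transitivity of dMTS refinement. -/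
lemma dmtsRef_trans {V : Type}
    {mustR : U → A → Set U → Prop} {mayR : U → Lbl A → U → Prop}
    {mustP : S → A → Set S → Prop} {mayP : S → Lbl A → S → Prop}
    {mustS : V → A → Set V → Prop} {mayS : V → Lbl A → V → Prop}
    {r : U} {p : S} {s : V}
    (h1 : DMTSRef mustR mayR mustP mayP r p) (h2 : DMTSRef mustP mayP mustS mayS p s) :
    DMTSRef mustR mayR mustS mayS r s := by
  obtain ⟨R1, hR1, hr1⟩ := h1
  obtain ⟨R2, hR2, hr2⟩ := h2
  refine ⟨fun r s => ∃ p, R1 r p ∧ R2 p s, ?_, ⟨p, hr1, hr2⟩⟩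
  rintro r s ⟨p, hrp, hps⟩
  refine ⟨?_, ?_, ?_⟩
  · intro a S' hms
    obtain ⟨P', hmp, hcov2⟩ := (hR2 _ _ hps).1 _ _ hms
    obtain ⟨R', hmr, hcov1⟩ := (hR1 _ _ hrp).1 _ _ hmp
    refine ⟨R', hmr, fun r' hr' => ?_⟩
    obtain ⟨p', hp', hr1'⟩ := hcov1 r' hr'
    obtain ⟨s', hs', hr2'⟩ := hcov2 p' hp'
    exact ⟨s', hs', p', hr1', hr2'⟩
  · intro a r' hmay
    obtain ⟨p', hwp, hr1'⟩ := (hR1 _ _ hrp).2.1 _ _ hmay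
    obtain ⟨s', hws, hr2'⟩ := ref_weakTr hR2 hwp hps
    exact ⟨s', hws, p', hr1', hr2'⟩
  · intro r' hmay
    obtain ⟨p', hwp, hr1'⟩ := (hR1 _ _ hrp).2.2 _ hmay
    obtain ⟨s', hws, hr2'⟩ := ref_eps hR2 hwp hps
    exact ⟨s', hws, p', hr1', hr2'⟩

/-- Inconsistent states of the product have no common implementation. -/
lemma incons_no_common {mustP : S → A → Set S → Prop} {mayP : S → Lbl A → S → Prop}
    {mustQ : T → A → Set T → Prop} {mayQ : T → Lbl A → T → Prop}
    {x : S × T} (hx : Incons mustP mayP mustQ mayQ x) :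
    ∀ (U : Type) (mustR : U → A → Set U → Prop) (mayR : U → Lbl A → U → Prop),
      IsDMTS mustR mayR → ∀ r : U,
        DMTSRef mustR mayR mustP mayP r x.1 → DMTSRef mustR mayR mustQ mayQ r x.2 → False := by
  induction hx with
  | @f1 p q a P' hm hq =>
    intro U mustR mayR hR r h1 h2
    obtain ⟨R1, hR1, hr1⟩ := h1
    obtain ⟨R2, hR2, hr2⟩ := h2
    obtain ⟨Ur, hmr, _⟩ := (hR1 _ _ hr1).1 _ _ hm
    obtain ⟨r', hr'⟩ := hR.1 _ _ _ hmr
    have hmay := hR.2 _ _ _ _ hmr hr'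
    obtain ⟨q', hq', _⟩ := (hR2 _ _ hr2).2.1 _ _ hmay
    exact hq ⟨q', hq'⟩
  | @f2 p q a Q' hp hm =>
    intro U mustR mayR hR r h1 h2
    obtain ⟨R1, hR1, hr1⟩ := h1
    obtain ⟨R2, hR2, hr2⟩ := h2
    obtain ⟨Ur, hmr, _⟩ := (hR2 _ _ hr2).1 _ _ hm
    obtain ⟨r', hr'⟩ := hR.1 _ _ _ hmr
    have hmay := hR.2 _ _ _ _ hmr hr'
    obtain ⟨p', hp', _⟩ := (hR1 _ _ hr1).2.1 _ _ hmay
    exact hp ⟨p', hp'⟩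
  | @f3 p q a R' hc _ ih =>
    intro U mustR mayR hR r h1 h2
    obtain ⟨R1, hR1, hr1⟩ := h1
    obtain ⟨R2, hR2, hr2⟩ := h2
    cases hc with
    | @must1 _ _ _ P' hm hqw =>
      obtain ⟨Ur, hmr, hcov⟩ := (hR1 _ _ hr1).1 _ _ hm
      obtain ⟨r', hr'⟩ := hR.1 _ _ _ hmr
      obtain ⟨p', hp', hr1'⟩ := hcov r' hr'
      have hmay := hR.2 _ _ _ _ hmr hr'
      obtain ⟨q', hq', hr2'⟩ := (hR2 _ _ hr2).2.1 _ _ hmay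
      exact ih (p', q') ⟨hp', hq'⟩ U mustR mayR hR r' ⟨R1, hR1, hr1'⟩ ⟨R2, hR2, hr2'⟩
    | @must2 _ _ _ Q' hpw hm =>
      obtain ⟨Ur, hmr, hcov⟩ := (hR2 _ _ hr2).1 _ _ hm
      obtain ⟨r', hr'⟩ := hR.1 _ _ _ hmr
      obtain ⟨q', hq', hr2'⟩ := hcov r' hr'
      have hmay := hR.2 _ _ _ _ hmr hr'
      obtain ⟨p', hp', hr1'⟩ := (hR1 _ _ hr1).2.1 _ _ hmay
      exact ih (p', q') ⟨hp', hq'⟩ U mustR mayR hR r' ⟨R1, hR1, hr1'⟩ ⟨R2, hR2, hr2'⟩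

variable {mustP : S → A → Set S → Prop} {mayP : S → Lbl A → S → Prop}
  {mustQ : T → A → Set T → Prop} {mayQ : T → Lbl A → T → Prop}

/-- The conjunction `P ∧ Q` is a well-formed dMTS. -/
lemma and_isDMTS (hP : IsDMTS mustP mayP) (hQ : IsDMTS mustQ mayQ) :
    IsDMTS (AndMust mustP mayP mustQ mayQ) (AndMay mustP mayP mustQ mayQ) := by
  constructor
  · rintro ⟨p₀, q₀⟩ a R'' ⟨hs, R', hc, rfl⟩
    by_contra hne
    rw [Set.not_nonempty_iff_eq_empty, Set.eq_empty_iff_forall_notMem] at hne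
    refine hs (Incons.f3 hc fun x hx => ?_)
    by_contra hxc
    exact hne x ⟨hx, hxc⟩
  · rintro s a R'' x ⟨hs, R', hc, rfl⟩ ⟨hxR, hxc⟩
    refine ⟨hs, hxc, ?_⟩
    obtain ⟨x1, x2⟩ := x
    cases hc with
    | must1 hm hqw =>
      exact ConjMay.may3 (weakTr_of_step (hP.2 _ _ _ _ hm hxR.1)) hxR.2
    | must2 hpw hm =>
      exact ConjMay.may3 hxR.1 (weakTr_of_step (hQ.2 _ _ _ _ hm hxR.2))

/-- The conjunction refines the left component. -/
lemma conj_ref_left :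
    IsModalRef (AndMust mustP mayP mustQ mayQ) (AndMay mustP mayP mustQ mayQ)
      mustP mayP (fun x y => ¬ Incons mustP mayP mustQ mayQ x ∧ x.1 = y) := by
  rintro ⟨p₁, q₁⟩ y ⟨hx, rfl⟩
  refine ⟨?_, ?_, ?_⟩
  · intro a P' hm
    have hqw : ∃ q', WeakTr mayQ q₁ (some a) q' := by
      by_contra h; exact hx (Incons.f1 hm h)
    refine ⟨_, ⟨hx, _, ConjMust.must1 hm hqw, rfl⟩, ?_⟩
    rintro ⟨p', q'⟩ ⟨⟨hp', _⟩, hc⟩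
    exact ⟨p', hp', hc, rfl⟩
  · rintro a x' ⟨_, hx', hc⟩
    cases hc with
    | may3 hp hq => exact ⟨_, hp, hx', rfl⟩
  · rintro x' ⟨_, hx', hc⟩
    cases hc with
    | may1 hp => exact ⟨_, weakEps_of_weakTr hp, hx', rfl⟩
    | may2 hq => exact ⟨_, Relation.ReflTransGen.refl, hx', rfl⟩
    | may3 hp hq => exact ⟨_, weakEps_of_weakTr hp, hx', rfl⟩

/-- The conjunction refines the right component. -/
lemma conj_ref_right :
    IsModalRef (AndMust mustP mayP mustQ mayQ) (AndMay mustP mayP mustQ mayQ)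
      mustQ mayQ (fun x y => ¬ Incons mustP mayP mustQ mayQ x ∧ x.2 = y) := by
  rintro ⟨p₁, q₁⟩ y ⟨hx, rfl⟩
  refine ⟨?_, ?_, ?_⟩
  · intro a Q' hm
    have hpw : ∃ p', WeakTr mayP p₁ (some a) p' := by
      by_contra h; exact hx (Incons.f2 h hm)
    refine ⟨_, ⟨hx, _, ConjMust.must2 hpw hm, rfl⟩, ?_⟩
    rintro ⟨p', q'⟩ ⟨⟨_, hq'⟩, hc⟩
    exact ⟨q', hq', hc, rfl⟩
  · rintro a x' ⟨_, hx', hc⟩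
    cases hc with
    | may3 hp hq => exact ⟨_, hq, hx', rfl⟩
  · rintro x' ⟨_, hx', hc⟩
    cases hc with
    | may1 hp => exact ⟨_, Relation.ReflTransGen.refl, hx', rfl⟩
    | may2 hq => exact ⟨_, weakEps_of_weakTr hq, hx', rfl⟩
    | may3 hp hq => exact ⟨_, weakEps_of_weakTr hq, hx', rfl⟩

/-- A common refinement of `P` and `Q` refines the conjunction. -/
lemma common_ref_conj {mustR : U → A → Set U → Prop} {mayR : U → Lbl A → U → Prop}
    (hR : IsDMTS mustR mayR) {R1 : U → S → Prop} {R2 : U → T → Prop}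
    (hR1 : IsModalRef mustR mayR mustP mayP R1) (hR2 : IsModalRef mustR mayR mustQ mayQ R2) :
    IsModalRef mustR mayR (AndMust mustP mayP mustQ mayQ) (AndMay mustP mayP mustQ mayQ)
      (fun r x => R1 r x.1 ∧ R2 r x.2) := by
  have hcons : ∀ (r : U) (x : S × T), R1 r x.1 → R2 r x.2 →
      ¬ Incons mustP mayP mustQ mayQ x :=
    fun r x h1 h2 hi => incons_no_common hi U mustR mayR hR r ⟨R1, hR1, h1⟩ ⟨R2, hR2, h2⟩
  rintro r ⟨p₀, q₀⟩ ⟨h1, h2⟩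
  refine ⟨?_, ?_, ?_⟩
  · rintro a R'' ⟨hx, R', hc, rfl⟩
    cases hc with
    | @must1 _ _ _ P' hm hqw =>
      obtain ⟨Ur, hmr, hcov⟩ := (hR1 _ _ h1).1 _ _ hm
      refine ⟨Ur, hmr, fun r' hr' => ?_⟩
      obtain ⟨p', hp', h1'⟩ := hcov r' hr'
      have hmay := hR.2 _ _ _ _ hmr hr'
      obtain ⟨q', hq', h2'⟩ := (hR2 _ _ h2).2.1 _ _ hmay
      exact ⟨(p', q'), ⟨⟨hp', hq'⟩, hcons r' (p', q') h1' h2'⟩, h1', h2'⟩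
    | @must2 _ _ _ Q' hpw hm =>
      obtain ⟨Ur, hmr, hcov⟩ := (hR2 _ _ h2).1 _ _ hm
      refine ⟨Ur, hmr, fun r' hr' => ?_⟩
      obtain ⟨q', hq', h2'⟩ := hcov r' hr'
      have hmay := hR.2 _ _ _ _ hmr hr'
      obtain ⟨p', hp', h1'⟩ := (hR1 _ _ h1).2.1 _ _ hmay
      exact ⟨(p', q'), ⟨⟨hp', hq'⟩, hcons r' (p', q') h1' h2'⟩, h1', h2'⟩
  · intro a r' hmay
    obtain ⟨p', hwp, h1'⟩ := (hR1 _ _ h1).2.1 _ _ hmay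
    obtain ⟨q', hwq, h2'⟩ := (hR2 _ _ h2).2.1 _ _ hmay
    exact ⟨(p', q'),
      weakTr_of_step ⟨hcons r (p₀, q₀) h1 h2, hcons r' (p', q') h1' h2',
        ConjMay.may3 hwp hwq⟩, h1', h2'⟩
  · intro r' hmay
    obtain ⟨p', hwp, h1'⟩ := (hR1 _ _ h1).2.2 _ hmay
    obtain ⟨q', hwq, h2'⟩ := (hR2 _ _ h2).2.2 _ hmay
    refine ⟨(p', q'), ?_, h1', h2'⟩
    have hc0 := hcons r (p₀, q₀) h1 h2
    have hc1 := hcons r' (p', q') h1' h2'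
    rcases weakEps_cases hwp with rfl | hwp' <;> rcases weakEps_cases hwq with rfl | hwq'
    · exact Relation.ReflTransGen.refl
    · exact Relation.ReflTransGen.single ⟨hc0, hc1, ConjMay.may2 hwq'⟩
    · exact Relation.ReflTransGen.single ⟨hc0, hc1, ConjMay.may1 hwp'⟩
    · exact Relation.ReflTransGen.single ⟨hc0, hc1, ConjMay.may3 hwp' hwq'⟩

end Aux

/-- Theorem 3.5 (`∧` is And for dMTS): (i) consistency of `p ∧ q` is equivalent to
the existence of a common implementation; (ii) `∧` is the greatest lower bound. -/
theorem dmts_conj_is_and {A S T : Type}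
    (mustP : S → A → Set S → Prop) (mayP : S → Lbl A → S → Prop)
    (mustQ : T → A → Set T → Prop) (mayQ : T → Lbl A → T → Prop)
    (hP : IsDMTS mustP mayP) (hQ : IsDMTS mustQ mayQ) (p : S) (q : T) :
    ((∃ (U : Type) (mustR : U → A → Set U → Prop) (mayR : U → Lbl A → U → Prop),
        IsDMTS mustR mayR ∧ ∃ r : U,
          DMTSRef mustR mayR mustP mayP r p ∧ DMTSRef mustR mayR mustQ mayQ r q) ↔
      ¬ Incons mustP mayP mustQ mayQ (p, q)) ∧
    (¬ Incons mustP mayP mustQ mayQ (p, q) →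
      ∀ (U : Type) (mustR : U → A → Set U → Prop) (mayR : U → Lbl A → U → Prop),
        IsDMTS mustR mayR → ∀ r : U,
          ((DMTSRef mustR mayR mustP mayP r p ∧ DMTSRef mustR mayR mustQ mayQ r q) ↔
            DMTSRef mustR mayR (AndMust mustP mayP mustQ mayQ)
              (AndMay mustP mayP mustQ mayQ) r (p, q))) := by
  have hleft : ¬ Incons mustP mayP mustQ mayQ (p, q) →
      DMTSRef (AndMust mustP mayP mustQ mayQ) (AndMay mustP mayP mustQ mayQ)
        mustP mayP (p, q) p :=
    fun hcons => ⟨_, conj_ref_left, hcons, rfl⟩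
  have hright : ¬ Incons mustP mayP mustQ mayQ (p, q) →
      DMTSRef (AndMust mustP mayP mustQ mayQ) (AndMay mustP mayP mustQ mayQ)
        mustQ mayQ (p, q) q :=
    fun hcons => ⟨_, conj_ref_right, hcons, rfl⟩
  constructor
  · constructor
    · rintro ⟨U, mustR, mayR, hR, r, h1, h2⟩ hinc
      exact incons_no_common hinc U mustR mayR hR r h1 h2
    · intro hcons
      exact ⟨S × T, AndMust mustP mayP mustQ mayQ, AndMay mustP mayP mustQ mayQ,
        and_isDMTS hP hQ, (p, q), hleft hcons, hright hcons⟩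
  · intro hcons U mustR mayR hR r
    constructor
    · rintro ⟨⟨R1, hR1, hr1⟩, ⟨R2, hR2, hr2⟩⟩
      exact ⟨fun r x => R1 r x.1 ∧ R2 r x.2, common_ref_conj hR hR1 hR2, hr1, hr2⟩
    · intro h
      exact ⟨dmtsRef_trans h (hleft hcons), dmtsRef_trans h (hright hcons)⟩
end

section
/- (Lemma 3.6, Concrete dMTS-Witness) Let P & Q be the conjunctive product of dMTSs P and Q with common alphabet, F its set of inconsistent states, and R a dMTS. Then: (i) for every dMTS-witness W of P & Q, F ∩ W = ∅; and (ii) the set { (p,q) ∈ P × Q | ∃ r ∈ R. r ⊑_dMTS p and r ⊑_dMTS q } is a dMTS-witness of P & Q. -/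
/-- A dMTS-witness of the conjunctive product `P & Q` (conditions (W1)-(W3)). -/
def IsDMTSWitness {S T A : Type} (mustP : S → A → Set S → Prop) (mayP : S → Lbl A → S → Prop)
    (mustQ : T → A → Set T → Prop) (mayQ : T → Lbl A → T → Prop) (W : Set (S × T)) : Prop :=
  ∀ p q, (p, q) ∈ W →
    (∀ a P', mustP p a P' → ∃ q', WeakTr mayQ q (some a) q') ∧
    (∀ a Q', mustQ q a Q' → ∃ p', WeakTr mayP p (some a) p') ∧
    (∀ a R', ConjMust mustP mayP mustQ mayQ (p, q) a R' → (R' ∩ W).Nonempty)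

/-- Lemma 3.6 (concrete dMTS-witness): (i) every dMTS-witness is disjoint from the
inconsistency set `F`; (ii) the pairs with a common implementation in `R` form a
dMTS-witness of `P & Q`. -/
theorem dmts_concrete_witness {A S T U : Type}
    (mustP : S → A → Set S → Prop) (mayP : S → Lbl A → S → Prop)
    (mustQ : T → A → Set T → Prop) (mayQ : T → Lbl A → T → Prop)
    (mustR : U → A → Set U → Prop) (mayR : U → Lbl A → U → Prop)
    (hP : IsDMTS mustP mayP) (hQ : IsDMTS mustQ mayQ) (hR : IsDMTS mustR mayR) :
    (∀ W : Set (S × T), IsDMTSWitness mustP mayP mustQ mayQ W →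
      {s | Incons mustP mayP mustQ mayQ s} ∩ W = ∅) ∧
    IsDMTSWitness mustP mayP mustQ mayQ
      {x | ∃ r : U, DMTSRef mustR mayR mustP mayP r x.1 ∧
        DMTSRef mustR mayR mustQ mayQ r x.2} := by
  constructor
  · intro W hW
    ext s
    simp only [Set.mem_inter_iff, Set.mem_empty_iff_false, iff_false, not_and,
      Set.mem_setOf_eq]
    intro hinc
    induction hinc with
    | f1 hmust hnq =>
      intro hmem; exact hnq ((hW _ _ hmem).1 _ _ hmust)
    | f2 hnp hmust =>
      intro hmem; exact hnp ((hW _ _ hmem).2.1 _ _ hmust)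
    | f3 hcm hall ih =>
      intro hmem
      obtain ⟨x, hx, hxW⟩ := (hW _ _ hmem).2.2 _ _ hcm
      exact ih x hx hxW
  · intro p q hmem
    obtain ⟨r, ⟨R1, hR1, hr1⟩, R2, hR2, hr2⟩ := hmem
    refine ⟨?_, ?_, ?_⟩
    · intro a P' hm
      obtain ⟨R', hmR, _⟩ := (hR1 r p hr1).1 a P' hm
      obtain ⟨r', hr'⟩ := hR.1 _ _ _ hmR
      obtain ⟨q', hq', _⟩ := (hR2 r q hr2).2.1 a r' (hR.2 _ _ _ _ hmR hr')
      exact ⟨q', hq'⟩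
    · intro a Q' hm
      obtain ⟨R', hmR, _⟩ := (hR2 r q hr2).1 a Q' hm
      obtain ⟨r', hr'⟩ := hR.1 _ _ _ hmR
      obtain ⟨p', hp', _⟩ := (hR1 r p hr1).2.1 a r' (hR.2 _ _ _ _ hmR hr')
      exact ⟨p', hp'⟩
    · intro a R' hcm
      cases hcm with
      | must1 hmP hq =>
        obtain ⟨RR, hmR, hsim⟩ := (hR1 r p hr1).1 _ _ hmP
        obtain ⟨r', hr'⟩ := hR.1 _ _ _ hmR
        obtain ⟨p', hp'P, hrel⟩ := hsim r' hr'
        obtain ⟨q', hq', hrel2⟩ := (hR2 r q hr2).2.1 _ _ (hR.2 _ _ _ _ hmR hr')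
        exact ⟨(p', q'), ⟨hp'P, hq'⟩, ⟨r', ⟨R1, hR1, hrel⟩, ⟨R2, hR2, hrel2⟩⟩⟩
      | must2 hp hmQ =>
        obtain ⟨RR, hmR, hsim⟩ := (hR2 r q hr2).1 _ _ hmQ
        obtain ⟨r', hr'⟩ := hR.1 _ _ _ hmR
        obtain ⟨q', hq'Q, hrel2⟩ := hsim r' hr'
        obtain ⟨p', hp', hrel⟩ := (hR1 r p hr1).2.1 _ _ (hR.2 _ _ _ _ hmR hr')
        exact ⟨(p', q'), ⟨hp', hq'Q⟩, ⟨r', ⟨R1, hR1, hrel⟩, ⟨R2, hR2, hrel2⟩⟩⟩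
end

section
/- (Corollary 3.7) dMTS-refinement is compositional with respect to dMTS-conjunction: for dMTSs with common alphabet and states p, q, r, if p ⊑_dMTS q and p ∧ r is defined, then q ∧ r is defined and p ∧ r ⊑_dMTS q ∧ r. -/
section Aux

variable {S T U A : Type}
variable {mustP : S → A → Set S → Prop} {mayP : S → Lbl A → S → Prop}
variable {mustQ : T → A → Set T → Prop} {mayQ : T → Lbl A → T → Prop}
variable {mustR : U → A → Set U → Prop} {mayR : U → Lbl A → U → Prop}
variable {R : S → T → Prop}

lemma wk_eps (hRm : IsModalRef mustP mayP mustQ mayQ R) {p p' : S} {q : T} (hpq : R p q)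
    (h : WeakEps mayP p p') : ∃ q', WeakEps mayQ q q' ∧ R p' q' := by
  induction h with
  | refl => exact ⟨q, Relation.ReflTransGen.refl, hpq⟩
  | tail _ hstep ih =>
    obtain ⟨q'', heps, hr⟩ := ih
    obtain ⟨q', he, hr'⟩ := (hRm _ _ hr).2.2 _ hstep
    exact ⟨q', Relation.ReflTransGen.trans heps he, hr'⟩

lemma wk_tau (hRm : IsModalRef mustP mayP mustQ mayQ R) {p p' : S} {q : T} (hpq : R p q)
    (h : WeakTr mayP p none p') : ∃ q', WeakEps mayQ q q' ∧ R p' q' := by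
  obtain ⟨p'', heps, hstep⟩ := h
  obtain ⟨q'', he, hr⟩ := wk_eps hRm hpq heps
  obtain ⟨q', he', hr'⟩ := (hRm _ _ hr).2.2 _ hstep
  exact ⟨q', Relation.ReflTransGen.trans he he', hr'⟩

lemma wk_act (hRm : IsModalRef mustP mayP mustQ mayQ R) {p p' : S} {q : T} {a : A} (hpq : R p q)
    (h : WeakTr mayP p (some a) p') : ∃ q', WeakTr mayQ q (some a) q' ∧ R p' q' := by
  obtain ⟨p'', heps, hstep⟩ := h
  obtain ⟨q'', he, hr⟩ := wk_eps hRm hpq heps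
  obtain ⟨q', ⟨qm, hqe, hqs⟩, hr'⟩ := (hRm _ _ hr).2.1 _ _ hstep
  exact ⟨q', ⟨qm, Relation.ReflTransGen.trans he hqe, hqs⟩, hr'⟩

/-- Key lemma: inconsistency of `(q, u)` pulls back along refinement `R p q`. -/
lemma incons_back (hRm : IsModalRef mustP mayP mustQ mayQ R) :
    ∀ s : T × U, Incons mustQ mayQ mustR mayR s →
      ∀ p, R p s.1 → Incons mustP mayP mustR mayR (p, s.2) := by
  intro s h
  induction h with
  | @f1 q u a Q' hmust hno =>
    intro p hpq
    obtain ⟨P', hmP, _⟩ := (hRm _ _ hpq).1 _ _ hmust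
    exact Incons.f1 hmP hno
  | @f2 q u a U' hno hmust =>
    intro p hpq
    refine Incons.f2 ?_ hmust
    rintro ⟨p', hp'⟩
    obtain ⟨q', hq', _⟩ := wk_act hRm hpq hp'
    exact hno ⟨q', hq'⟩
  | @f3 q u a R' hcm hall ih =>
    intro p hpq
    cases hcm with
    | @must1 _ _ _ Q' hmQ hex =>
      obtain ⟨P', hmP, hmatch⟩ := (hRm _ _ hpq).1 _ _ hmQ
      refine Incons.f3 (ConjMust.must1 hmP hex) ?_
      rintro ⟨p', u'⟩ ⟨hp', hu'⟩
      obtain ⟨q', hq'Q, hrel⟩ := hmatch _ hp'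
      exact ih (q', u') ⟨hq'Q, hu'⟩ p' hrel
    | @must2 _ _ _ U' hex hmU =>
      by_cases hpw : ∃ p', WeakTr mayP p (some a) p'
      · refine Incons.f3 (ConjMust.must2 hpw hmU) ?_
        rintro ⟨p', u'⟩ ⟨hp', hu'⟩
        obtain ⟨q', hq', hrel⟩ := wk_act hRm hpq hp'
        exact ih (q', u') ⟨hq', hu'⟩ p' hrel
      · exact Incons.f2 hpw hmU

end Aux

/-- Corollary 3.7: dMTS-refinement is compositional w.r.t. dMTS-conjunction. -/
theorem dmts_conj_compositional {A S T U : Type}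
    (mustP : S → A → Set S → Prop) (mayP : S → Lbl A → S → Prop)
    (mustQ : T → A → Set T → Prop) (mayQ : T → Lbl A → T → Prop)
    (mustR : U → A → Set U → Prop) (mayR : U → Lbl A → U → Prop)
    (hP : IsDMTS mustP mayP) (hQ : IsDMTS mustQ mayQ) (hR : IsDMTS mustR mayR)
    (p : S) (q : T) (r : U)
    (hpq : DMTSRef mustP mayP mustQ mayQ p q)
    (hdef : ¬ Incons mustP mayP mustR mayR (p, r)) :
    ¬ Incons mustQ mayQ mustR mayR (q, r) ∧
    DMTSRef (AndMust mustP mayP mustR mayR) (AndMay mustP mayP mustR mayR)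
      (AndMust mustQ mayQ mustR mayR) (AndMay mustQ mayQ mustR mayR)
      (p, r) (q, r) := by
  clear hP hQ hR
  obtain ⟨R, hRm, hpq⟩ := hpq
  have key : ∀ (p₀ : S) (q₀ : T) (u : U), R p₀ q₀ →
      ¬ Incons mustP mayP mustR mayR (p₀, u) → ¬ Incons mustQ mayQ mustR mayR (q₀, u) :=
    fun p₀ q₀ u hr hc hi => hc (incons_back hRm (q₀, u) hi p₀ hr)
  refine ⟨key p q r hpq hdef, ?_⟩
  refine ⟨fun x y => x.2 = y.2 ∧ R x.1 y.1 ∧ ¬ Incons mustP mayP mustR mayR x,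
    ?_, rfl, hpq, hdef⟩
  rintro ⟨p₀, u⟩ ⟨q₀, u'⟩ ⟨heq, hr, hcons⟩
  dsimp at heq hr hcons
  subst heq
  have hqcons : ¬ Incons mustQ mayQ mustR mayR (q₀, u) := key _ _ _ hr hcons
  refine ⟨?_, ?_, ?_⟩
  · -- must-condition
    rintro a Q'' ⟨-, R', hcm, rfl⟩
    cases hcm with
    | @must1 _ _ _ Q' hmQ hex =>
      obtain ⟨P', hmP, hmatch⟩ := (hRm _ _ hr).1 _ _ hmQ
      refine ⟨_, ⟨hcons, _, ConjMust.must1 hmP hex, rfl⟩, ?_⟩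
      rintro ⟨p', w⟩ ⟨⟨hp', hw⟩, hcx⟩
      obtain ⟨q', hq'Q, hrel⟩ := hmatch _ hp'
      exact ⟨(q', w), ⟨⟨hq'Q, hw⟩, key _ _ _ hrel hcx⟩, rfl, hrel, hcx⟩
    | @must2 _ _ _ U' hex hmU =>
      have hpw : ∃ p', WeakTr mayP p₀ (some a) p' := by
        by_contra hno
        exact hcons (Incons.f2 hno hmU)
      refine ⟨_, ⟨hcons, _, ConjMust.must2 hpw hmU, rfl⟩, ?_⟩
      rintro ⟨p', w⟩ ⟨⟨hp', hw⟩, hcx⟩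
      obtain ⟨q', hq', hrel⟩ := wk_act hRm hr hp'
      exact ⟨(q', w), ⟨⟨hq', hw⟩, key _ _ _ hrel hcx⟩, rfl, hrel, hcx⟩
  · -- visible may-condition
    rintro a x' ⟨-, hcx', hcm⟩
    cases hcm with
    | @may3 _ _ _ p' w' hpw hrw =>
      obtain ⟨q', hq', hrel⟩ := wk_act hRm hr hpw
      have hcq : ¬ Incons mustQ mayQ mustR mayR (q', w') := key _ _ _ hrel hcx'
      exact ⟨(q', w'),
        ⟨(q₀, u), Relation.ReflTransGen.refl, hqcons, hcq, ConjMay.may3 hq' hrw⟩,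
        rfl, hrel, hcx'⟩
  · -- silent may-condition
    rintro x' ⟨-, hcx', hcm⟩
    cases hcm with
    | @may1 _ _ p' hpw =>
      obtain ⟨q', he, hrel⟩ := wk_tau hRm hr hpw
      rcases Relation.ReflTransGen.cases_tail he with rfl | ⟨c, hc, hstep⟩
      · exact ⟨(q', u), Relation.ReflTransGen.refl, rfl, hrel, hcx'⟩
      · have hcq : ¬ Incons mustQ mayQ mustR mayR (q', u) := key _ _ _ hrel hcx'
        exact ⟨(q', u),
          Relation.ReflTransGen.single ⟨hqcons, hcq, ConjMay.may1 ⟨c, hc, hstep⟩⟩,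
          rfl, hrel, hcx'⟩
    | @may2 _ _ w' hrw =>
      have hcq : ¬ Incons mustQ mayQ mustR mayR (q₀, w') := key _ _ _ hr hcx'
      exact ⟨(q₀, w'),
        Relation.ReflTransGen.single ⟨hqcons, hcq, ConjMay.may2 hrw⟩,
        rfl, hr, hcx'⟩
    | @may3 _ _ _ p' w' hpw hrw =>
      obtain ⟨q', he, hrel⟩ := wk_tau hRm hr hpw
      rcases Relation.ReflTransGen.cases_tail he with rfl | ⟨c, hc, hstep⟩
      · have hcq : ¬ Incons mustQ mayQ mustR mayR (q', w') := key _ _ _ hrel hcx'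
        exact ⟨(q', w'),
          Relation.ReflTransGen.single ⟨hqcons, hcq, ConjMay.may2 hrw⟩,
          rfl, hrel, hcx'⟩
      · have hcq : ¬ Incons mustQ mayQ mustR mayR (q', w') := key _ _ _ hrel hcx'
        exact ⟨(q', w'),
          Relation.ReflTransGen.single ⟨hqcons, hcq, ConjMay.may3 ⟨c, hc, hstep⟩ hrw⟩,
          rfl, hrel, hcx'⟩
end

section
/- (Theorem 3.9, '∨ is Or' for dMTS) Let P, Q and R be disjunctive Modal Transition Systems with common alphabet and states p, q and r respectively. Then p ∨ q ⊑_dMTS r if and only if p ⊑_dMTS r and q ⊑_dMTS r, where p ∨ q is the state of the dMTS-disjunction P ∨ Q corresponding to the pair (p,q). That is, ∨ is the least upper bound with respect to dMTS-refinement. -/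
/-- Must-transitions of the dMTS-disjunction `P ∨ Q` (rule (Must) plus inherited ones). -/
inductive OrMust {S T A : Type} (mustP : S → A → Set S → Prop) (mustQ : T → A → Set T → Prop) :
    CState S T → A → Set (CState S T) → Prop
  | fromP {p a P'} : mustP p a P' → OrMust mustP mustQ (CState.left p) a (CState.left '' P')
  | fromQ {q a Q'} : mustQ q a Q' → OrMust mustP mustQ (CState.right q) a (CState.right '' Q')
  | comb {p q a P' Q'} : mustP p a P' → mustQ q a Q' →
      OrMust mustP mustQ (CState.comb p q) a (CState.left '' P' ∪ CState.right '' Q')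

/-- May-transitions of the dMTS-disjunction `P ∨ Q` (rules (May1), (May2) plus inherited ones). -/
inductive OrMay {S T A : Type} (mayP : S → Lbl A → S → Prop) (mayQ : T → Lbl A → T → Prop) :
    CState S T → Lbl A → CState S T → Prop
  | fromP {p α p'} : mayP p α p' → OrMay mayP mayQ (CState.left p) α (CState.left p')
  | fromQ {q α q'} : mayQ q α q' → OrMay mayP mayQ (CState.right q) α (CState.right q')
  | may1 {p q α p'} : mayP p α p' → OrMay mayP mayQ (CState.comb p q) α (CState.left p')
  | may2 {p q α q'} : mayQ q α q' → OrMay mayP mayQ (CState.comb p q) α (CState.right q')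

/-- Theorem 3.9 (`∨` is Or for dMTS): dMTS-disjunction is the least upper bound
with respect to dMTS-refinement. -/
theorem dmts_disj_is_or {A S T U : Type}
    (mustP : S → A → Set S → Prop) (mayP : S → Lbl A → S → Prop)
    (mustQ : T → A → Set T → Prop) (mayQ : T → Lbl A → T → Prop)
    (mustR : U → A → Set U → Prop) (mayR : U → Lbl A → U → Prop)
    (hP : IsDMTS mustP mayP) (hQ : IsDMTS mustQ mayQ) (hR : IsDMTS mustR mayR)
    (p : S) (q : T) (r : U) :
    DMTSRef (OrMust mustP mustQ) (OrMay mayP mayQ) mustR mayR (CState.comb p q) r ↔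
      (DMTSRef mustP mayP mustR mayR p r ∧ DMTSRef mustQ mayQ mustR mayR q r) := by
  constructor
  · rintro ⟨R, hRef, hpq⟩
    constructor
    · refine ⟨fun s u => R (CState.left s) u ∨ ∃ t, R (CState.comb s t) u, ?_, Or.inr ⟨q, hpq⟩⟩
      rintro s u (h | ⟨t, h⟩)
      · obtain ⟨hmust, hmay, htau⟩ := hRef _ _ h
        refine ⟨?_, ?_, ?_⟩
        · intro a U' hU
          obtain ⟨P'', hP'', hmatch⟩ := hmust a U' hU
          cases hP'' with
          | @fromP p0 a0 P' hm =>
            refine ⟨P', hm, fun p' hp' => ?_⟩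
            obtain ⟨u', hu', hr⟩ := hmatch (CState.left p') ⟨p', hp', rfl⟩
            exact ⟨u', hu', Or.inl hr⟩
        · intro a s' hs'
          obtain ⟨u', hw, hr⟩ := hmay a _ (OrMay.fromP hs')
          exact ⟨u', hw, Or.inl hr⟩
        · intro s' hs'
          obtain ⟨u', hw, hr⟩ := htau _ (OrMay.fromP hs')
          exact ⟨u', hw, Or.inl hr⟩
      · obtain ⟨hmust, hmay, htau⟩ := hRef _ _ h
        refine ⟨?_, ?_, ?_⟩
        · intro a U' hU
          obtain ⟨P'', hP'', hmatch⟩ := hmust a U' hU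
          cases hP'' with
          | @comb p0 q0 a0 P' Q' hm1 hm2 =>
            refine ⟨P', hm1, fun p' hp' => ?_⟩
            obtain ⟨u', hu', hr⟩ := hmatch (CState.left p') (Or.inl ⟨p', hp', rfl⟩)
            exact ⟨u', hu', Or.inl hr⟩
        · intro a s' hs'
          obtain ⟨u', hw, hr⟩ := hmay a _ (OrMay.may1 hs')
          exact ⟨u', hw, Or.inl hr⟩
        · intro s' hs'
          obtain ⟨u', hw, hr⟩ := htau _ (OrMay.may1 hs')
          exact ⟨u', hw, Or.inl hr⟩
    · refine ⟨fun t u => R (CState.right t) u ∨ ∃ s, R (CState.comb s t) u, ?_, Or.inr ⟨p, hpq⟩⟩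
      rintro t u (h | ⟨s, h⟩)
      · obtain ⟨hmust, hmay, htau⟩ := hRef _ _ h
        refine ⟨?_, ?_, ?_⟩
        · intro a U' hU
          obtain ⟨Q'', hQ'', hmatch⟩ := hmust a U' hU
          cases hQ'' with
          | @fromQ q0 a0 Q' hm =>
            refine ⟨Q', hm, fun q' hq' => ?_⟩
            obtain ⟨u', hu', hr⟩ := hmatch (CState.right q') ⟨q', hq', rfl⟩
            exact ⟨u', hu', Or.inl hr⟩
        · intro a t' ht'
          obtain ⟨u', hw, hr⟩ := hmay a _ (OrMay.fromQ ht')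
          exact ⟨u', hw, Or.inl hr⟩
        · intro t' ht'
          obtain ⟨u', hw, hr⟩ := htau _ (OrMay.fromQ ht')
          exact ⟨u', hw, Or.inl hr⟩
      · obtain ⟨hmust, hmay, htau⟩ := hRef _ _ h
        refine ⟨?_, ?_, ?_⟩
        · intro a U' hU
          obtain ⟨Q'', hQ'', hmatch⟩ := hmust a U' hU
          cases hQ'' with
          | @comb p0 q0 a0 P' Q' hm1 hm2 =>
            refine ⟨Q', hm2, fun q' hq' => ?_⟩
            obtain ⟨u', hu', hr⟩ := hmatch (CState.right q') (Or.inr ⟨q', hq', rfl⟩)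
            exact ⟨u', hu', Or.inl hr⟩
        · intro a t' ht'
          obtain ⟨u', hw, hr⟩ := hmay a _ (OrMay.may2 ht')
          exact ⟨u', hw, Or.inl hr⟩
        · intro t' ht'
          obtain ⟨u', hw, hr⟩ := htau _ (OrMay.may2 ht')
          exact ⟨u', hw, Or.inl hr⟩
  · rintro ⟨⟨R1, h1, hp⟩, ⟨R2, h2, hq⟩⟩
    refine ⟨fun c u => match c with
      | CState.left s => R1 s u
      | CState.right t => R2 t u
      | CState.comb s t => R1 s u ∧ R2 t u, ?_, ⟨hp, hq⟩⟩
    intro c u hc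
    cases c with
    | left s =>
      obtain ⟨hmust, hmay, htau⟩ := h1 _ _ hc
      refine ⟨?_, ?_, ?_⟩
      · intro a U' hU
        obtain ⟨P', hmP, f⟩ := hmust a U' hU
        refine ⟨CState.left '' P', OrMust.fromP hmP, ?_⟩
        rintro c' ⟨p', hp', rfl⟩
        exact f p' hp'
      · rintro a c' hm
        cases hm with
        | fromP h' => exact hmay a _ h'
      · rintro c' hm
        cases hm with
        | fromP h' => exact htau _ h'
    | right t =>
      obtain ⟨hmust, hmay, htau⟩ := h2 _ _ hc
      refine ⟨?_, ?_, ?_⟩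
      · intro a U' hU
        obtain ⟨Q', hmQ, f⟩ := hmust a U' hU
        refine ⟨CState.right '' Q', OrMust.fromQ hmQ, ?_⟩
        rintro c' ⟨q', hq', rfl⟩
        exact f q' hq'
      · rintro a c' hm
        cases hm with
        | fromQ h' => exact hmay a _ h'
      · rintro c' hm
        cases hm with
        | fromQ h' => exact htau _ h'
    | comb s t =>
      obtain ⟨hc1, hc2⟩ := hc
      obtain ⟨hmust1, hmay1, htau1⟩ := h1 _ _ hc1
      obtain ⟨hmust2, hmay2, htau2⟩ := h2 _ _ hc2
      refine ⟨?_, ?_, ?_⟩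
      · intro a U' hU
        obtain ⟨P', hmP, f1⟩ := hmust1 a U' hU
        obtain ⟨Q', hmQ, f2⟩ := hmust2 a U' hU
        refine ⟨CState.left '' P' ∪ CState.right '' Q', OrMust.comb hmP hmQ, ?_⟩
        rintro c' (⟨p', hp', rfl⟩ | ⟨q', hq', rfl⟩)
        · exact f1 p' hp'
        · exact f2 q' hq'
      · rintro a c' hm
        cases hm with
        | may1 h' => exact hmay1 a _ h'
        | may2 h' => exact hmay2 a _ h'
      · rintro c' hm
        cases hm with
        | may1 h' => exact htau1 _ h'
        | may2 h' => exact htau2 _ h'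
end

section
/- (Corollary 3.10) dMTS-refinement is compositional with respect to dMTS-disjunction: for dMTSs with common alphabet and states p, q, r, if p ⊑_dMTS q then p ∨ r ⊑_dMTS q ∨ r. -/
section Aux
variable {S T U A : Type}

inductive DisjRel_s9 (R : S → T → Prop) : CState S U → CState T U → Prop
  | l {p q} : R p q → DisjRel_s9 R (CState.left p) (CState.left q)
  | r {u} : DisjRel_s9 R (CState.right u) (CState.right u)
  | c {p q u} : R p q → DisjRel_s9 R (CState.comb p u) (CState.comb q u)
  | lc {p q u} : R p q → DisjRel_s9 R (CState.left p) (CState.comb q u)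

lemma weakEps_left {mayQ : T → Lbl A → T → Prop} {mayR : U → Lbl A → U → Prop} {q q' : T}
    (h : WeakEps mayQ q q') :
    WeakEps (OrMay mayQ mayR) (CState.left q : CState T U) (CState.left q') := by
  induction h with
  | refl => exact Relation.ReflTransGen.refl
  | tail _ hs ih => exact ih.tail (OrMay.fromP hs)

lemma weakEps_right {mayQ : T → Lbl A → T → Prop} {mayR : U → Lbl A → U → Prop} {u u' : U}
    (h : WeakEps mayR u u') :
    WeakEps (OrMay mayQ mayR) (CState.right u : CState T U) (CState.right u') := by
  induction h with
  | refl => exact Relation.ReflTransGen.refl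
  | tail _ hs ih => exact ih.tail (OrMay.fromQ hs)

lemma weakTr_comb_left {mayQ : T → Lbl A → T → Prop} {mayR : U → Lbl A → U → Prop}
    {q q' : T} {α : Lbl A} {u : U}
    (h : WeakTr mayQ q α q') :
    WeakTr (OrMay mayQ mayR) (CState.comb q u) α (CState.left q') := by
  obtain ⟨q'', heps, hstep⟩ := h
  rcases heps.cases_head with rfl | ⟨c, h1, h2⟩
  · exact ⟨CState.comb q u, Relation.ReflTransGen.refl, OrMay.may1 hstep⟩
  · exact ⟨CState.left q'',
      Relation.ReflTransGen.head (OrMay.may1 h1) (weakEps_left h2),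
      OrMay.fromP hstep⟩

end Aux

/-- Corollary 3.10: dMTS-refinement is compositional w.r.t. dMTS-disjunction. -/
theorem dmts_disj_compositional {A S T U : Type}
    (mustP : S → A → Set S → Prop) (mayP : S → Lbl A → S → Prop)
    (mustQ : T → A → Set T → Prop) (mayQ : T → Lbl A → T → Prop)
    (mustR : U → A → Set U → Prop) (mayR : U → Lbl A → U → Prop)
    (hP : IsDMTS mustP mayP) (hQ : IsDMTS mustQ mayQ) (hR : IsDMTS mustR mayR)
    (p : S) (q : T) (r : U)
    (hpq : DMTSRef mustP mayP mustQ mayQ p q) :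
    DMTSRef (OrMust mustP mustR) (OrMay mayP mayR)
      (OrMust mustQ mustR) (OrMay mayQ mayR)
      (CState.comb p r) (CState.comb q r) := by
  obtain ⟨R, hRmod, hRpq⟩ := hpq
  refine ⟨DisjRel_s9 R, ?_, DisjRel_s9.c hRpq⟩
  intro x y hxy
  refine ⟨?_, ?_, ?_⟩
  · -- must condition
    intro a Q' hmust
    cases hxy with
    | l hpq' =>
      cases hmust with
      | fromP hm =>
        obtain ⟨P', hP', hmatch⟩ := (hRmod _ _ hpq').1 _ _ hm
        refine ⟨CState.left '' P', OrMust.fromP hP', ?_⟩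
        rintro _ ⟨p', hp', rfl⟩
        obtain ⟨q', hq', hR'⟩ := hmatch p' hp'
        exact ⟨CState.left q', ⟨q', hq', rfl⟩, DisjRel_s9.l hR'⟩
    | r =>
      cases hmust with
      | fromQ hm =>
        refine ⟨_, OrMust.fromQ hm, ?_⟩
        rintro _ ⟨u', hu', rfl⟩
        exact ⟨CState.right u', ⟨u', hu', rfl⟩, DisjRel_s9.r⟩
    | lc hpq' =>
      cases hmust with
      | comb hmQ hmR =>
        obtain ⟨P', hP', hmatch⟩ := (hRmod _ _ hpq').1 _ _ hmQ
        refine ⟨CState.left '' P', OrMust.fromP hP', ?_⟩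
        rintro _ ⟨p', hp', rfl⟩
        obtain ⟨q', hq', hR'⟩ := hmatch p' hp'
        exact ⟨CState.left q', Or.inl ⟨q', hq', rfl⟩, DisjRel_s9.l hR'⟩
    | c hpq' =>
      cases hmust with
      | comb hmQ hmR =>
        obtain ⟨P', hP', hmatch⟩ := (hRmod _ _ hpq').1 _ _ hmQ
        refine ⟨_, OrMust.comb hP' hmR, ?_⟩
        rintro _ (⟨p', hp', rfl⟩ | ⟨u', hu', rfl⟩)
        · obtain ⟨q', hq', hR'⟩ := hmatch p' hp'
          exact ⟨CState.left q', Or.inl ⟨q', hq', rfl⟩, DisjRel_s9.l hR'⟩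
        · exact ⟨CState.right u', Or.inr ⟨u', hu', rfl⟩, DisjRel_s9.r⟩
  · -- visible may
    intro a x' hmay
    cases hxy with
    | l hpq' =>
      cases hmay with
      | fromP hm =>
        obtain ⟨q', ⟨q'', heps, hstep⟩, hR'⟩ := (hRmod _ _ hpq').2.1 _ _ hm
        exact ⟨CState.left q', ⟨CState.left q'', weakEps_left heps, OrMay.fromP hstep⟩,
          DisjRel_s9.l hR'⟩
    | r =>
      cases hmay with
      | fromQ hm =>
        exact ⟨_, ⟨_, Relation.ReflTransGen.refl, OrMay.fromQ hm⟩, DisjRel_s9.r⟩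
    | lc hpq' =>
      cases hmay with
      | fromP hm =>
        obtain ⟨q', hw, hR'⟩ := (hRmod _ _ hpq').2.1 _ _ hm
        exact ⟨CState.left q', weakTr_comb_left hw, DisjRel_s9.l hR'⟩
    | c hpq' =>
      cases hmay with
      | may1 hm =>
        obtain ⟨q', hw, hR'⟩ := (hRmod _ _ hpq').2.1 _ _ hm
        exact ⟨CState.left q', weakTr_comb_left hw, DisjRel_s9.l hR'⟩
      | may2 hm =>
        exact ⟨_, ⟨_, Relation.ReflTransGen.refl, OrMay.may2 hm⟩, DisjRel_s9.r⟩
  · -- tau may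
    intro x' hmay
    cases hxy with
    | l hpq' =>
      cases hmay with
      | fromP hm =>
        obtain ⟨q', heps, hR'⟩ := (hRmod _ _ hpq').2.2 _ hm
        exact ⟨CState.left q', weakEps_left heps, DisjRel_s9.l hR'⟩
    | r =>
      cases hmay with
      | fromQ hm =>
        exact ⟨_, Relation.ReflTransGen.single (OrMay.fromQ hm), DisjRel_s9.r⟩
    | lc hpq' =>
      cases hmay with
      | fromP hm =>
        obtain ⟨q', heps, hR'⟩ := (hRmod _ _ hpq').2.2 _ hm
        rcases heps.cases_head with rfl | ⟨c, h1, h2⟩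
        · exact ⟨CState.comb _ _, Relation.ReflTransGen.refl, DisjRel_s9.lc hR'⟩
        · exact ⟨CState.left q',
            Relation.ReflTransGen.head (OrMay.may1 h1) (weakEps_left h2), DisjRel_s9.l hR'⟩
    | c hpq' =>
      cases hmay with
      | may1 hm =>
        obtain ⟨q', heps, hR'⟩ := (hRmod _ _ hpq').2.2 _ hm
        rcases heps.cases_head with rfl | ⟨c, h1, h2⟩
        · exact ⟨CState.comb _ _, Relation.ReflTransGen.refl, DisjRel_s9.lc hR'⟩
        · exact ⟨CState.left q',
            Relation.ReflTransGen.head (OrMay.may1 h1) (weakEps_left h2), DisjRel_s9.l hR'⟩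
      | may2 hm =>
        exact ⟨_, Relation.ReflTransGen.single (OrMay.may2 hm), DisjRel_s9.r⟩
end

section
/- (Proposition 3.12(a), Conjunction and IA-Embedding into dMTS) For all Interface Automata P and Q with common input and output alphabets and states p ∈ P, q ∈ Q such that the IA-conjunction p ∧ q is defined: ⟨p ∧ q⟩ ⊑_dMTS ⟨p⟩ ∧ ⟨q⟩, where ⟨·⟩ denotes the embedding of IA into dMTS, the left ∧ is IA-conjunction, and the right ∧ is dMTS-conjunction. -/
/-- May-transitions of the embedding of an IA into dMTS: states are `P ∪ {u_P}`,
where the universal state `u_P` is encoded as `none`. -/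
inductive EmbMay {S A : Type} (I O : Set A) (tr : S → Lbl A → S → Prop) :
    Option S → Lbl A → Option S → Prop
  | trans {p α p'} : tr p α p' → EmbMay I O tr (some p) α (some p')
  | toUniv {p a} : a ∈ I → ¬ (∃ p', tr p (some a) p') → EmbMay I O tr (some p) (some a) none
  | univ {a} : a ∈ I ∪ O → EmbMay I O tr none (some a) none

/-- Must-transitions of the embedding of an IA into dMTS: only singleton
input-musts coming from the IA's input transitions. -/
inductive EmbMust {S A : Type} (I : Set A) (tr : S → Lbl A → S → Prop) :
    Option S → A → Set (Option S) → Prop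
  | input {p a p'} : a ∈ I → tr p (some a) p' → EmbMust I tr (some p) a {some p'}


section IAEmbAux

lemma weak_single {S A : Type} {tr : S → Lbl A → S → Prop} {p : S} {α : Lbl A} {p' : S}
    (h : tr p α p') : WeakTr tr p α p' :=
  ⟨p, Relation.ReflTransGen.refl, h⟩

lemma emb_may_input {S A : Type} {I O : Set A} {tr : S → Lbl A → S → Prop} {a : A}
    (ha : a ∈ I) (y : Option S) : ∃ y', EmbMay I O tr y (some a) y' := by
  cases y with
  | none => exact ⟨none, EmbMay.univ (Or.inl ha)⟩
  | some p =>
    by_cases h : ∃ p', tr p (some a) p'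
    · obtain ⟨p', hp'⟩ := h
      exact ⟨some p', EmbMay.trans hp'⟩
    · exact ⟨none, EmbMay.toUniv ha h⟩

lemma incons_empty {A S T : Type} (I O : Set A)
    (trP : S → Lbl A → S → Prop) (trQ : T → Lbl A → T → Prop) :
    ∀ x, ¬ Incons (EmbMust I trP) (EmbMay I O trP) (EmbMust I trQ) (EmbMay I O trQ) x := by
  intro x h
  induction h with
  | f1 hm hno =>
    cases hm with
    | input ha htr =>
      obtain ⟨y', hy'⟩ := emb_may_input (O := O) (tr := trQ) ha _
      exact hno ⟨y', weak_single hy'⟩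
  | f2 hno hm =>
    cases hm with
    | input ha htr =>
      obtain ⟨y', hy'⟩ := emb_may_input (O := O) (tr := trP) ha _
      exact hno ⟨y', weak_single hy'⟩
  | f3 hm _ ih =>
    cases hm with
    | must1 hmP hw =>
      cases hmP with
      | input ha htr =>
        obtain ⟨q', hq'⟩ := hw
        exact ih (some _, q') ⟨rfl, hq'⟩
    | must2 hw hmQ =>
      cases hmQ with
      | input ha htr =>
        obtain ⟨p', hp'⟩ := hw
        exact ih (p', some _) ⟨hp', rfl⟩

/-- The simulation relation between embedded IA-conjunction states and the product. -/
inductive EmbRel {S T : Type} : Option (CState S T) → Option S × Option T → Prop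
  | comb (p q) : EmbRel (some (CState.comb p q)) (some p, some q)
  | left (p) : EmbRel (some (CState.left p)) (some p, none)
  | right (q) : EmbRel (some (CState.right q)) (none, some q)
  | univ : EmbRel none (none, none)

end IAEmbAux

/-- Proposition 3.12(a): the embedding of the IA-conjunction refines the
dMTS-conjunction of the embeddings. -/
theorem ia_embedding_conj {A S T : Type} (I O : Set A)
    (trP : S → Lbl A → S → Prop) (trQ : T → Lbl A → T → Prop)
    (hP : IsIA I O trP) (hQ : IsIA I O trQ) (p : S) (q : T) :
    DMTSRef (EmbMust I (ConjTr I O trP trQ)) (EmbMay I O (ConjTr I O trP trQ))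
      (AndMust (EmbMust I trP) (EmbMay I O trP) (EmbMust I trQ) (EmbMay I O trQ))
      (AndMay (EmbMust I trP) (EmbMay I O trP) (EmbMust I trQ) (EmbMay I O trQ))
      (some (CState.comb p q)) (some p, some q) := by
  refine ⟨EmbRel, ?_, EmbRel.comb p q⟩
  clear p q
  have nc := incons_empty I O trP trQ
  have andMay : ∀ {s s' : Option S × Option T} {α},
      ConjMay (EmbMay I O trP) (EmbMay I O trQ) s α s' →
      AndMay (EmbMust I trP) (EmbMay I O trP) (EmbMust I trQ) (EmbMay I O trQ) s α s' :=
    fun h => ⟨nc _, nc _, h⟩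
  intro c y hR
  cases hR with
  | comb p q =>
    refine ⟨?_, ?_, ?_⟩
    · -- must condition
      intro a Q' hmust
      obtain ⟨-, R', hR', rfl⟩ := hmust
      cases hR' with
      | must1 hmP hw =>
        cases hmP with
        | input ha htrP =>
          rename_i p'
          by_cases hq : ∃ q', trQ q (some a) q'
          · obtain ⟨q0, hq0⟩ := hq
            refine ⟨{some (CState.comb p' q0)},
              EmbMust.input ha (ConjTr.i3 ha htrP hq0), ?_⟩
            intro x hx
            rw [Set.mem_singleton_iff] at hx; subst hx
            exact ⟨(some p', some q0),
              ⟨⟨rfl, weak_single (EmbMay.trans hq0)⟩, nc _⟩, EmbRel.comb p' q0⟩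
          · refine ⟨{some (CState.left p')},
              EmbMust.input ha (ConjTr.i1 ha htrP hq), ?_⟩
            intro x hx
            rw [Set.mem_singleton_iff] at hx; subst hx
            exact ⟨(some p', none),
              ⟨⟨rfl, weak_single (EmbMay.toUniv ha hq)⟩, nc _⟩, EmbRel.left p'⟩
      | must2 hw hmQ =>
        cases hmQ with
        | input ha htrQ =>
          rename_i q'
          by_cases hp : ∃ p', trP p (some a) p'
          · obtain ⟨p0, hp0⟩ := hp
            refine ⟨{some (CState.comb p0 q')},
              EmbMust.input ha (ConjTr.i3 ha hp0 htrQ), ?_⟩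
            intro x hx
            rw [Set.mem_singleton_iff] at hx; subst hx
            exact ⟨(some p0, some q'),
              ⟨⟨weak_single (EmbMay.trans hp0), rfl⟩, nc _⟩, EmbRel.comb p0 q'⟩
          · refine ⟨{some (CState.right q')},
              EmbMust.input ha (ConjTr.i2 ha hp htrQ), ?_⟩
            intro x hx
            rw [Set.mem_singleton_iff] at hx; subst hx
            exact ⟨(none, some q'),
              ⟨⟨weak_single (EmbMay.toUniv ha hp), rfl⟩, nc _⟩, EmbRel.right q'⟩
    · -- visible may condition
      intro a c'' hmay
      cases hmay with
      | trans hct =>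
        cases hct with
        | i1 ha htrP hno =>
          exact ⟨(some _, none), weak_single (andMay (ConjMay.may3
            (weak_single (EmbMay.trans htrP)) (weak_single (EmbMay.toUniv ha hno)))),
            EmbRel.left _⟩
        | i2 ha hno htrQ =>
          exact ⟨(none, some _), weak_single (andMay (ConjMay.may3
            (weak_single (EmbMay.toUniv ha hno)) (weak_single (EmbMay.trans htrQ)))),
            EmbRel.right _⟩
        | i3 ha htrP htrQ =>
          exact ⟨(some _, some _), weak_single (andMay (ConjMay.may3
            (weak_single (EmbMay.trans htrP)) (weak_single (EmbMay.trans htrQ)))),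
            EmbRel.comb _ _⟩
        | out ha htrP htrQ =>
          exact ⟨(some _, some _), weak_single (andMay (ConjMay.may3
            (weak_single (EmbMay.trans htrP)) (weak_single (EmbMay.trans htrQ)))),
            EmbRel.comb _ _⟩
      | toUniv ha hno =>
        have hnoP : ¬ ∃ p', trP p (some a) p' := by
          rintro ⟨p', hp'⟩
          by_cases hq : ∃ q', trQ q (some a) q'
          · obtain ⟨q0, hq0⟩ := hq
            exact hno ⟨_, ConjTr.i3 ha hp' hq0⟩
          · exact hno ⟨_, ConjTr.i1 ha hp' hq⟩
        have hnoQ : ¬ ∃ q', trQ q (some a) q' := by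
          rintro ⟨q', hq'⟩
          exact hno ⟨_, ConjTr.i2 ha hnoP hq'⟩
        exact ⟨(none, none), weak_single (andMay (ConjMay.may3
          (weak_single (EmbMay.toUniv ha hnoP)) (weak_single (EmbMay.toUniv ha hnoQ)))),
          EmbRel.univ⟩
    · -- τ may condition
      intro c' hmay
      cases hmay with
      | trans hct =>
        cases hct with
        | t1 htrP =>
          exact ⟨(some _, some q), Relation.ReflTransGen.single
            (andMay (ConjMay.may1 (weak_single (EmbMay.trans htrP)))), EmbRel.comb _ q⟩
        | t2 htrQ =>
          exact ⟨(some p, some _), Relation.ReflTransGen.single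
            (andMay (ConjMay.may2 (weak_single (EmbMay.trans htrQ)))), EmbRel.comb p _⟩
  | left p =>
    refine ⟨?_, ?_, ?_⟩
    · intro a Q' hmust
      obtain ⟨-, R', hR', rfl⟩ := hmust
      cases hR' with
      | must1 hmP hw =>
        cases hmP with
        | input ha htrP =>
          rename_i p'
          refine ⟨{some (CState.left p')},
            EmbMust.input ha (ConjTr.fromP htrP), ?_⟩
          intro x hx
          rw [Set.mem_singleton_iff] at hx; subst hx
          exact ⟨(some p', none),
            ⟨⟨rfl, weak_single (EmbMay.univ (Or.inl ha))⟩, nc _⟩, EmbRel.left p'⟩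
      | must2 hw hmQ => cases hmQ
    · intro a c'' hmay
      cases hmay with
      | trans hct =>
        cases hct with
        | fromP htrP =>
          exact ⟨(some _, none), weak_single (andMay (ConjMay.may3
            (weak_single (EmbMay.trans htrP))
            (weak_single (EmbMay.univ (hP.2.1 _ _ _ htrP))))), EmbRel.left _⟩
      | toUniv ha hno =>
        have hnoP : ¬ ∃ p', trP p (some a) p' := by
          rintro ⟨p', hp'⟩
          exact hno ⟨_, ConjTr.fromP hp'⟩
        exact ⟨(none, none), weak_single (andMay (ConjMay.may3
          (weak_single (EmbMay.toUniv ha hnoP)) (weak_single (EmbMay.univ (Or.inl ha))))),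
          EmbRel.univ⟩
    · intro c' hmay
      cases hmay with
      | trans hct =>
        cases hct with
        | fromP htrP =>
          exact ⟨(some _, none), Relation.ReflTransGen.single
            (andMay (ConjMay.may1 (weak_single (EmbMay.trans htrP)))), EmbRel.left _⟩
  | right q =>
    refine ⟨?_, ?_, ?_⟩
    · intro a Q' hmust
      obtain ⟨-, R', hR', rfl⟩ := hmust
      cases hR' with
      | must1 hmP hw => cases hmP
      | must2 hw hmQ =>
        cases hmQ with
        | input ha htrQ =>
          rename_i q'
          refine ⟨{some (CState.right q')},
            EmbMust.input ha (ConjTr.fromQ htrQ), ?_⟩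
          intro x hx
          rw [Set.mem_singleton_iff] at hx; subst hx
          exact ⟨(none, some q'),
            ⟨⟨weak_single (EmbMay.univ (Or.inl ha)), rfl⟩, nc _⟩, EmbRel.right q'⟩
    · intro a c'' hmay
      cases hmay with
      | trans hct =>
        cases hct with
        | fromQ htrQ =>
          exact ⟨(none, some _), weak_single (andMay (ConjMay.may3
            (weak_single (EmbMay.univ (hQ.2.1 _ _ _ htrQ)))
            (weak_single (EmbMay.trans htrQ)))), EmbRel.right _⟩
      | toUniv ha hno =>
        have hnoQ : ¬ ∃ q', trQ q (some a) q' := by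
          rintro ⟨q', hq'⟩
          exact hno ⟨_, ConjTr.fromQ hq'⟩
        exact ⟨(none, none), weak_single (andMay (ConjMay.may3
          (weak_single (EmbMay.univ (Or.inl ha))) (weak_single (EmbMay.toUniv ha hnoQ)))),
          EmbRel.univ⟩
    · intro c' hmay
      cases hmay with
      | trans hct =>
        cases hct with
        | fromQ htrQ =>
          exact ⟨(none, some _), Relation.ReflTransGen.single
            (andMay (ConjMay.may2 (weak_single (EmbMay.trans htrQ)))), EmbRel.right _⟩
  | univ =>
    refine ⟨?_, ?_, ?_⟩
    · intro a Q' hmust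
      obtain ⟨-, R', hR', rfl⟩ := hmust
      cases hR' with
      | must1 hmP hw => cases hmP
      | must2 hw hmQ => cases hmQ
    · intro a c'' hmay
      cases hmay with
      | univ ha =>
        exact ⟨(none, none), weak_single (andMay (ConjMay.may3
          (weak_single (EmbMay.univ ha)) (weak_single (EmbMay.univ ha)))), EmbRel.univ⟩
    · intro c' hmay
      cases hmay
end

section
/- (Proposition 3.12(b), Disjunction and IA-Embedding into dMTS) For all Interface Automata P and Q with common input and output alphabets and states p ∈ P, q ∈ Q: ⟨p⟩ ∨ ⟨q⟩ ⊑_dMTS ⟨p ∨ q⟩, where ⟨·⟩ denotes the embedding of IA into dMTS, the right ∨ is IA-disjunction, and the left ∨ is dMTS-disjunction. -/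
section Aux

variable {A S T : Type} {I O : Set A}

lemma weakTr_single {S' : Type} {tr : S' → Lbl A → S' → Prop} {p α p'}
    (h : tr p α p') : WeakTr tr p α p' := ⟨p, Relation.ReflTransGen.refl, h⟩

lemma embMay_lbl {tr : S → Lbl A → S → Prop}
    (hlbl : ∀ s a s', tr s (some a) s' → a ∈ I ∪ O)
    {x a x'} (h : EmbMay I O tr x (some a) x') : a ∈ I ∪ O := by
  cases h with
  | trans h => exact hlbl _ _ _ h
  | toUniv ha _ => exact Or.inl ha
  | univ ha => exact ha

lemma noCombTrans {trP : S → Lbl A → S → Prop} {trQ : T → Lbl A → T → Prop}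
    (hdisj : Disjoint I O) {p q a} (ha : a ∈ I)
    (h : (¬ ∃ p', trP p (some a) p') ∨ ¬ ∃ q', trQ q (some a) q') :
    ¬ ∃ s', DisjTr I O trP trQ (CState.comb p q) (some a) s' := by
  rintro ⟨s', hs⟩
  cases hs with
  | inp _ hp hq =>
    rcases h with h | h
    · exact h ⟨_, hp⟩
    · exact h ⟨_, hq⟩
  | ot1 haO _ => exact Set.disjoint_left.mp hdisj ha haO
  | ot2 haO _ => exact Set.disjoint_left.mp hdisj ha haO

end Aux

/-- Proposition 3.12(b): the dMTS-disjunction of the embeddings refines the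
embedding of the IA-disjunction. -/
theorem ia_embedding_disj {A S T : Type} (I O : Set A)
    (trP : S → Lbl A → S → Prop) (trQ : T → Lbl A → T → Prop)
    (hP : IsIA I O trP) (hQ : IsIA I O trQ) (p : S) (q : T) :
    DMTSRef (OrMust (EmbMust I trP) (EmbMust I trQ))
      (OrMay (EmbMay I O trP) (EmbMay I O trQ))
      (EmbMust I (DisjTr I O trP trQ)) (EmbMay I O (DisjTr I O trP trQ))
      (CState.comb (some p) (some q)) (some (CState.comb p q)) := by
  classical
  obtain ⟨hdisj, hlblP, hdetP⟩ := hP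
  obtain ⟨_, hlblQ, hdetQ⟩ := hQ
  set trD := DisjTr I O trP trQ with htrD
  refine ⟨fun x y =>
    (∃ p q, x = CState.comb (some p) (some q) ∧ y = some (CState.comb p q)) ∨
    (∃ p, x = CState.left (some p) ∧ y = some (CState.left p)) ∨
    (∃ q, x = CState.right (some q) ∧ y = some (CState.right q)) ∨
    (∃ p q, x = CState.left (some p) ∧ y = some (CState.comb p q)) ∨
    (∃ p q, x = CState.right (some q) ∧ y = some (CState.comb p q)) ∨
    y = none, ?_, Or.inl ⟨p, q, rfl, rfl⟩⟩
  rintro x y (⟨p, q, rfl, rfl⟩ | ⟨p, rfl, rfl⟩ | ⟨q, rfl, rfl⟩ |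
    ⟨p, q, rfl, rfl⟩ | ⟨p, q, rfl, rfl⟩ | rfl)
  -- case comb / comb
  · refine ⟨?_, ?_, ?_⟩
    · rintro a Q' ⟨ha, hd⟩
      cases hd with
      | inp ha' hp hq =>
        refine ⟨_, OrMust.comb (EmbMust.input ha hp) (EmbMust.input ha hq), ?_⟩
        rintro x' (⟨x'', hx'', rfl⟩ | ⟨x'', hx'', rfl⟩) <;> rw [Set.mem_singleton_iff] at hx'' <;> subst hx''
        · exact ⟨_, rfl, Or.inr (Or.inr (Or.inr (Or.inl ⟨_, _, rfl, rfl⟩)))⟩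
        · exact ⟨_, rfl, Or.inr (Or.inr (Or.inr (Or.inr (Or.inl ⟨_, _, rfl, rfl⟩))))⟩
      | ot1 haO _ => exact absurd haO (Set.disjoint_left.mp hdisj ha)
      | ot2 haO _ => exact absurd haO (Set.disjoint_left.mp hdisj ha)
    · rintro a x' hmay
      cases hmay with
      | may1 h =>
        cases h with
        | trans htr =>
          rcases hlblP _ _ _ htr with haI | haO
          · by_cases hq : ∃ q', trQ q (some a) q'
            · obtain ⟨q', hq'⟩ := hq
              exact ⟨_, weakTr_single (EmbMay.trans (DisjTr.inp haI htr hq')),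
                Or.inr (Or.inr (Or.inr (Or.inl ⟨_, _, rfl, rfl⟩)))⟩
            · exact ⟨_, weakTr_single (EmbMay.toUniv haI (noCombTrans hdisj haI (Or.inr hq))),
                Or.inr (Or.inr (Or.inr (Or.inr (Or.inr rfl))))⟩
          · exact ⟨_, weakTr_single (EmbMay.trans (DisjTr.ot1 haO htr)),
              Or.inr (Or.inl ⟨_, rfl, rfl⟩)⟩
        | toUniv ha hno =>
          exact ⟨_, weakTr_single (EmbMay.toUniv ha (noCombTrans hdisj ha (Or.inl hno))),
            Or.inr (Or.inr (Or.inr (Or.inr (Or.inr rfl))))⟩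
      | may2 h =>
        cases h with
        | trans htr =>
          rcases hlblQ _ _ _ htr with haI | haO
          · by_cases hp : ∃ p', trP p (some a) p'
            · obtain ⟨p', hp'⟩ := hp
              exact ⟨_, weakTr_single (EmbMay.trans (DisjTr.inp haI hp' htr)),
                Or.inr (Or.inr (Or.inr (Or.inr (Or.inl ⟨_, _, rfl, rfl⟩))))⟩
            · exact ⟨_, weakTr_single (EmbMay.toUniv haI (noCombTrans hdisj haI (Or.inl hp))),
                Or.inr (Or.inr (Or.inr (Or.inr (Or.inr rfl))))⟩
          · exact ⟨_, weakTr_single (EmbMay.trans (DisjTr.ot2 haO htr)),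
              Or.inr (Or.inr (Or.inl ⟨_, rfl, rfl⟩))⟩
        | toUniv ha hno =>
          exact ⟨_, weakTr_single (EmbMay.toUniv ha (noCombTrans hdisj ha (Or.inr hno))),
            Or.inr (Or.inr (Or.inr (Or.inr (Or.inr rfl))))⟩
    · rintro x' hmay
      cases hmay with
      | may1 h =>
        cases h with
        | trans htr =>
          exact ⟨_, Relation.ReflTransGen.single (EmbMay.trans (DisjTr.ot1tau htr)),
            Or.inr (Or.inl ⟨_, rfl, rfl⟩)⟩
      | may2 h =>
        cases h with
        | trans htr =>
          exact ⟨_, Relation.ReflTransGen.single (EmbMay.trans (DisjTr.ot2tau htr)),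
            Or.inr (Or.inr (Or.inl ⟨_, rfl, rfl⟩))⟩
  -- case left / left
  · refine ⟨?_, ?_, ?_⟩
    · rintro a Q' ⟨ha, hd⟩
      cases hd with
      | fromP htr =>
        refine ⟨_, OrMust.fromP (EmbMust.input ha htr), ?_⟩
        rintro x' ⟨x'', hx'', rfl⟩
        rw [Set.mem_singleton_iff] at hx''; subst hx''
        exact ⟨_, rfl, Or.inr (Or.inl ⟨_, rfl, rfl⟩)⟩
    · rintro a x' hmay
      cases hmay with
      | fromP h =>
        cases h with
        | trans htr =>
          exact ⟨_, weakTr_single (EmbMay.trans (DisjTr.fromP htr)),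
            Or.inr (Or.inl ⟨_, rfl, rfl⟩)⟩
        | toUniv ha hno =>
          refine ⟨_, weakTr_single (EmbMay.toUniv ha ?_), Or.inr (Or.inr (Or.inr (Or.inr (Or.inr rfl))))⟩
          rintro ⟨s', hs⟩
          cases hs with
          | fromP htr => exact hno ⟨_, htr⟩
    · rintro x' hmay
      cases hmay with
      | fromP h =>
        cases h with
        | trans htr =>
          exact ⟨_, Relation.ReflTransGen.single (EmbMay.trans (DisjTr.fromP htr)),
            Or.inr (Or.inl ⟨_, rfl, rfl⟩)⟩
  -- case right / right
  · refine ⟨?_, ?_, ?_⟩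
    · rintro a Q' ⟨ha, hd⟩
      cases hd with
      | fromQ htr =>
        refine ⟨_, OrMust.fromQ (EmbMust.input ha htr), ?_⟩
        rintro x' ⟨x'', hx'', rfl⟩
        rw [Set.mem_singleton_iff] at hx''; subst hx''
        exact ⟨_, rfl, Or.inr (Or.inr (Or.inl ⟨_, rfl, rfl⟩))⟩
    · rintro a x' hmay
      cases hmay with
      | fromQ h =>
        cases h with
        | trans htr =>
          exact ⟨_, weakTr_single (EmbMay.trans (DisjTr.fromQ htr)),
            Or.inr (Or.inr (Or.inl ⟨_, rfl, rfl⟩))⟩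
        | toUniv ha hno =>
          refine ⟨_, weakTr_single (EmbMay.toUniv ha ?_), Or.inr (Or.inr (Or.inr (Or.inr (Or.inr rfl))))⟩
          rintro ⟨s', hs⟩
          cases hs with
          | fromQ htr => exact hno ⟨_, htr⟩
    · rintro x' hmay
      cases hmay with
      | fromQ h =>
        cases h with
        | trans htr =>
          exact ⟨_, Relation.ReflTransGen.single (EmbMay.trans (DisjTr.fromQ htr)),
            Or.inr (Or.inr (Or.inl ⟨_, rfl, rfl⟩))⟩
  -- case left / comb
  · refine ⟨?_, ?_, ?_⟩
    · rintro a Q' ⟨ha, hd⟩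
      cases hd with
      | inp ha' hp hq =>
        refine ⟨_, OrMust.fromP (EmbMust.input ha hp), ?_⟩
        rintro x' ⟨x'', hx'', rfl⟩
        rw [Set.mem_singleton_iff] at hx''; subst hx''
        exact ⟨_, rfl, Or.inr (Or.inr (Or.inr (Or.inl ⟨_, _, rfl, rfl⟩)))⟩
      | ot1 haO _ => exact absurd haO (Set.disjoint_left.mp hdisj ha)
      | ot2 haO _ => exact absurd haO (Set.disjoint_left.mp hdisj ha)
    · rintro a x' hmay
      cases hmay with
      | fromP h =>
        cases h with
        | trans htr =>
          rcases hlblP _ _ _ htr with haI | haO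
          · by_cases hq : ∃ q', trQ q (some a) q'
            · obtain ⟨q', hq'⟩ := hq
              exact ⟨_, weakTr_single (EmbMay.trans (DisjTr.inp haI htr hq')),
                Or.inr (Or.inr (Or.inr (Or.inl ⟨_, _, rfl, rfl⟩)))⟩
            · exact ⟨_, weakTr_single (EmbMay.toUniv haI (noCombTrans hdisj haI (Or.inr hq))),
                Or.inr (Or.inr (Or.inr (Or.inr (Or.inr rfl))))⟩
          · exact ⟨_, weakTr_single (EmbMay.trans (DisjTr.ot1 haO htr)),
              Or.inr (Or.inl ⟨_, rfl, rfl⟩)⟩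
        | toUniv ha hno =>
          exact ⟨_, weakTr_single (EmbMay.toUniv ha (noCombTrans hdisj ha (Or.inl hno))),
            Or.inr (Or.inr (Or.inr (Or.inr (Or.inr rfl))))⟩
    · rintro x' hmay
      cases hmay with
      | fromP h =>
        cases h with
        | trans htr =>
          exact ⟨_, Relation.ReflTransGen.single (EmbMay.trans (DisjTr.ot1tau htr)),
            Or.inr (Or.inl ⟨_, rfl, rfl⟩)⟩
  -- case right / comb
  · refine ⟨?_, ?_, ?_⟩
    · rintro a Q' ⟨ha, hd⟩
      cases hd with
      | inp ha' hp hq =>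
        refine ⟨_, OrMust.fromQ (EmbMust.input ha hq), ?_⟩
        rintro x' ⟨x'', hx'', rfl⟩
        rw [Set.mem_singleton_iff] at hx''; subst hx''
        exact ⟨_, rfl, Or.inr (Or.inr (Or.inr (Or.inr (Or.inl ⟨_, _, rfl, rfl⟩))))⟩
      | ot1 haO _ => exact absurd haO (Set.disjoint_left.mp hdisj ha)
      | ot2 haO _ => exact absurd haO (Set.disjoint_left.mp hdisj ha)
    · rintro a x' hmay
      cases hmay with
      | fromQ h =>
        cases h with
        | trans htr =>
          rcases hlblQ _ _ _ htr with haI | haO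
          · by_cases hp : ∃ p', trP p (some a) p'
            · obtain ⟨p', hp'⟩ := hp
              exact ⟨_, weakTr_single (EmbMay.trans (DisjTr.inp haI hp' htr)),
                Or.inr (Or.inr (Or.inr (Or.inr (Or.inl ⟨_, _, rfl, rfl⟩))))⟩
            · exact ⟨_, weakTr_single (EmbMay.toUniv haI (noCombTrans hdisj haI (Or.inl hp))),
                Or.inr (Or.inr (Or.inr (Or.inr (Or.inr rfl))))⟩
          · exact ⟨_, weakTr_single (EmbMay.trans (DisjTr.ot2 haO htr)),
              Or.inr (Or.inr (Or.inl ⟨_, rfl, rfl⟩))⟩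
        | toUniv ha hno =>
          exact ⟨_, weakTr_single (EmbMay.toUniv ha (noCombTrans hdisj ha (Or.inr hno))),
            Or.inr (Or.inr (Or.inr (Or.inr (Or.inr rfl))))⟩
    · rintro x' hmay
      cases hmay with
      | fromQ h =>
        cases h with
        | trans htr =>
          exact ⟨_, Relation.ReflTransGen.single (EmbMay.trans (DisjTr.ot2tau htr)),
            Or.inr (Or.inr (Or.inl ⟨_, rfl, rfl⟩))⟩
  -- case universal
  · refine ⟨?_, ?_, ?_⟩
    · rintro a Q' hm; cases hm
    · rintro a x' hmay
      have ha : a ∈ I ∪ O := by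
        cases hmay with
        | fromP h => exact embMay_lbl hlblP h
        | fromQ h => exact embMay_lbl hlblQ h
        | may1 h => exact embMay_lbl hlblP h
        | may2 h => exact embMay_lbl hlblQ h
      exact ⟨_, weakTr_single (EmbMay.univ ha), Or.inr (Or.inr (Or.inr (Or.inr (Or.inr rfl))))⟩
    · rintro x' _
      exact ⟨_, Relation.ReflTransGen.refl, Or.inr (Or.inr (Or.inr (Or.inr (Or.inr rfl))))⟩
end

section
/- (Lemma 4.6, MIA-Witness) Let P & Q be the conjunctive product of Modal Interface Automata P and Q with common input and output alphabets, and F its set of inconsistent states. Then: (i) for every MIA-witness W of P & Q, F ∩ W = ∅; and (ii) the set W = { (p,q) ∈ P × Q | there exist a MIA R and r ∈ R with r ⊑_MIA p and r ⊑_MIA q } ∪ P ∪ Q is a MIA-witness of P & Q. -/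
/-- `(must, may)` is a Modal Interface Automaton over inputs `I` and outputs `O`:
a syntactically consistent dMTS with labels in `I ∪ O`, at most one (disjunctive)
must-transition per input, and every input-may-transition underlies it. -/
def IsMIA {S A : Type} (I O : Set A) (must : S → A → Set S → Prop)
    (may : S → Lbl A → S → Prop) : Prop :=
  Disjoint I O ∧
  (∀ s a S', must s a S' → S'.Nonempty) ∧
  (∀ s a S' s', must s a S' → s' ∈ S' → may s (some a) s') ∧
  (∀ s a S', must s a S' → a ∈ I ∪ O) ∧
  (∀ s a s', may s (some a) s' → a ∈ I ∪ O) ∧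
  (∀ s i S' S'', i ∈ I → must s i S' → must s i S'' → S' = S'') ∧
  (∀ s i s', i ∈ I → may s (some i) s' → ∃ S', must s i S' ∧ s' ∈ S')

/-- Observational MIA-refinement relation: like modal refinement, but
may-transitions only need to be matched for outputs and τ. -/
def IsMIASim {S T A : Type} (O : Set A) (mustP : S → A → Set S → Prop)
    (mayP : S → Lbl A → S → Prop) (mustQ : T → A → Set T → Prop)
    (mayQ : T → Lbl A → T → Prop) (R : S → T → Prop) : Prop :=
  ∀ p q, R p q →
    (∀ a Q', mustQ q a Q' → ∃ P', mustP p a P' ∧ ∀ p' ∈ P', ∃ q' ∈ Q', R p' q') ∧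
    (∀ a p', a ∈ O → mayP p (some a) p' → ∃ q', WeakTr mayQ q (some a) q' ∧ R p' q') ∧
    (∀ p', mayP p none p' → ∃ q', WeakEps mayQ q q' ∧ R p' q')

/-- MIA-refinement `p ⊑_MIA q`. -/
def MIARef {S T A : Type} (O : Set A) (mustP : S → A → Set S → Prop)
    (mayP : S → Lbl A → S → Prop) (mustQ : T → A → Set T → Prop)
    (mayQ : T → Lbl A → T → Prop) (p : S) (q : T) : Prop :=
  ∃ R, IsMIASim O mustP mayP mustQ mayQ R ∧ R p q

/-- Must-transitions of the MIA conjunctive product `P & Q`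
(rules (OMust1), (OMust2), (IMust1)-(IMust3) plus inherited ones). -/
inductive MConjMust {S T A : Type} (I O : Set A) (mustP : S → A → Set S → Prop)
    (mayP : S → Lbl A → S → Prop) (mustQ : T → A → Set T → Prop)
    (mayQ : T → Lbl A → T → Prop) : CState S T → A → Set (CState S T) → Prop
  | fromP {p a P'} : mustP p a P' →
      MConjMust I O mustP mayP mustQ mayQ (CState.left p) a (CState.left '' P')
  | fromQ {q a Q'} : mustQ q a Q' →
      MConjMust I O mustP mayP mustQ mayQ (CState.right q) a (CState.right '' Q')
  | omust1 {p q o P'} : o ∈ O → mustP p o P' → (∃ q', WeakTr mayQ q (some o) q') →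
      MConjMust I O mustP mayP mustQ mayQ (CState.comb p q) o
        {x | ∃ p' q', x = CState.comb p' q' ∧ p' ∈ P' ∧ WeakTr mayQ q (some o) q'}
  | omust2 {p q o Q'} : o ∈ O → (∃ p', WeakTr mayP p (some o) p') → mustQ q o Q' →
      MConjMust I O mustP mayP mustQ mayQ (CState.comb p q) o
        {x | ∃ p' q', x = CState.comb p' q' ∧ WeakTr mayP p (some o) p' ∧ q' ∈ Q'}
  | imust1 {p q i P'} : i ∈ I → mustP p i P' → ¬ (∃ Q', mustQ q i Q') →
      MConjMust I O mustP mayP mustQ mayQ (CState.comb p q) i (CState.left '' P')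
  | imust2 {p q i Q'} : i ∈ I → ¬ (∃ P', mustP p i P') → mustQ q i Q' →
      MConjMust I O mustP mayP mustQ mayQ (CState.comb p q) i (CState.right '' Q')
  | imust3 {p q i P' Q'} : i ∈ I → mustP p i P' → mustQ q i Q' →
      MConjMust I O mustP mayP mustQ mayQ (CState.comb p q) i
        {x | ∃ p' q', x = CState.comb p' q' ∧ p' ∈ P' ∧ q' ∈ Q'}

/-- May-transitions of the MIA conjunctive product `P & Q`
(rules (May1)-(May3), (IMay1)-(IMay3) plus inherited ones). -/
inductive MConjMay {S T A : Type} (I O : Set A) (mayP : S → Lbl A → S → Prop)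
    (mayQ : T → Lbl A → T → Prop) : CState S T → Lbl A → CState S T → Prop
  | fromP {p α p'} : mayP p α p' → MConjMay I O mayP mayQ (CState.left p) α (CState.left p')
  | fromQ {q α q'} : mayQ q α q' → MConjMay I O mayP mayQ (CState.right q) α (CState.right q')
  | may1 {p q p'} : WeakTr mayP p none p' →
      MConjMay I O mayP mayQ (CState.comb p q) none (CState.comb p' q)
  | may2 {p q q'} : WeakTr mayQ q none q' →
      MConjMay I O mayP mayQ (CState.comb p q) none (CState.comb p q')
  | may3 {p q α p' q'} : (∀ x, α = some x → x ∈ O) → WeakTr mayP p α p' →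
      WeakTr mayQ q α q' → MConjMay I O mayP mayQ (CState.comb p q) α (CState.comb p' q')
  | imay1 {p q i p'} : i ∈ I → mayP p (some i) p' → ¬ (∃ q', mayQ q (some i) q') →
      MConjMay I O mayP mayQ (CState.comb p q) (some i) (CState.left p')
  | imay2 {p q i q'} : i ∈ I → ¬ (∃ p', mayP p (some i) p') → mayQ q (some i) q' →
      MConjMay I O mayP mayQ (CState.comb p q) (some i) (CState.right q')
  | imay3 {p q i p' q'} : i ∈ I → mayP p (some i) p' → mayQ q (some i) q' →
      MConjMay I O mayP mayQ (CState.comb p q) (some i) (CState.comb p' q')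

/-- The set `F` of logically inconsistent states of the MIA conjunctive product
(rules (F1)-(F3)); only combined states `p ∧ q` can be inconsistent. -/
inductive MIncons {S T A : Type} (I O : Set A) (mustP : S → A → Set S → Prop)
    (mayP : S → Lbl A → S → Prop) (mustQ : T → A → Set T → Prop)
    (mayQ : T → Lbl A → T → Prop) : CState S T → Prop
  | f1 {p q o P'} : o ∈ O → mustP p o P' → ¬ (∃ q', WeakTr mayQ q (some o) q') →
      MIncons I O mustP mayP mustQ mayQ (CState.comb p q)
  | f2 {p q o Q'} : o ∈ O → ¬ (∃ p', WeakTr mayP p (some o) p') → mustQ q o Q' →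
      MIncons I O mustP mayP mustQ mayQ (CState.comb p q)
  | f3 {p q a R'} : MConjMust I O mustP mayP mustQ mayQ (CState.comb p q) a R' →
      (∀ x ∈ R', MIncons I O mustP mayP mustQ mayQ x) →
      MIncons I O mustP mayP mustQ mayQ (CState.comb p q)

/-- Must-transitions of the MIA-conjunction `P ∧ Q`: the product pruned of
inconsistent states (which are also removed from targets). -/
def MAndMust {S T A : Type} (I O : Set A) (mustP : S → A → Set S → Prop)
    (mayP : S → Lbl A → S → Prop) (mustQ : T → A → Set T → Prop)
    (mayQ : T → Lbl A → T → Prop) (s : CState S T) (a : A) (R'' : Set (CState S T)) : Prop :=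
  ¬ MIncons I O mustP mayP mustQ mayQ s ∧
  ∃ R', MConjMust I O mustP mayP mustQ mayQ s a R' ∧
    R'' = {x ∈ R' | ¬ MIncons I O mustP mayP mustQ mayQ x}

/-- May-transitions of the MIA-conjunction `P ∧ Q`. -/
def MAndMay {S T A : Type} (I O : Set A) (mustP : S → A → Set S → Prop)
    (mayP : S → Lbl A → S → Prop) (mustQ : T → A → Set T → Prop)
    (mayQ : T → Lbl A → T → Prop) (s : CState S T) (α : Lbl A) (s' : CState S T) : Prop :=
  ¬ MIncons I O mustP mayP mustQ mayQ s ∧ ¬ MIncons I O mustP mayP mustQ mayQ s' ∧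
  MConjMay I O mayP mayQ s α s'

/-- A MIA-witness of the conjunctive product `P & Q` (conditions (W1)-(W3)). -/
def IsMIAWitness {S T A : Type} (I O : Set A) (mustP : S → A → Set S → Prop)
    (mayP : S → Lbl A → S → Prop) (mustQ : T → A → Set T → Prop)
    (mayQ : T → Lbl A → T → Prop) (W : Set (CState S T)) : Prop :=
  ∀ p q, CState.comb p q ∈ W →
    (∀ o P', o ∈ O → mustP p o P' → ∃ q', WeakTr mayQ q (some o) q') ∧
    (∀ o Q', o ∈ O → mustQ q o Q' → ∃ p', WeakTr mayP p (some o) p') ∧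
    (∀ a R', MConjMust I O mustP mayP mustQ mayQ (CState.comb p q) a R' → (R' ∩ W).Nonempty)

/-!
(i) is an induction on the derivation of inconsistency: (F1) and (F2) are excluded in a witness
by (W1) and (W2), and a state entered by (F3) would need a witness successor that is already
inconsistent.

(ii) Let `r` refine both `p` and `q`. Every must-transition of `p` is answered by one of `r`,
whose (nonempty) target contains some `r'`; `r'` refines a target `p'` of `p`. For an output,
the underlying may-step `r ⇢o r'` is matched by a weak step `q ⤳o q'` with `r'` refining `q'`;
for an input, determinism of `r` makes the answers to `p` and `q` the same transition, so `r'`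
refines targets of both. In either case `(p', q')` again has the common implementation `r'`.
-/

section

variable {A S T U : Type} {I O : Set A}
  {mustP : S → A → Set S → Prop} {mayP : S → Lbl A → S → Prop}
  {mustQ : T → A → Set T → Prop} {mayQ : T → Lbl A → T → Prop}
  {mustR : U → A → Set U → Prop} {mayR : U → Lbl A → U → Prop}

theorem IsMIAWitness.notMem_of_mincons {W : Set (CState S T)}
    (hW : IsMIAWitness I O mustP mayP mustQ mayQ W) {x : CState S T}
    (hx : MIncons I O mustP mayP mustQ mayQ x) : x ∉ W := by
  induction hx with
  | f1 ho hmust hno => exact fun hW' => hno ((hW _ _ hW').1 _ _ ho hmust)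
  | f2 ho hno hmust => exact fun hW' => hno ((hW _ _ hW').2.1 _ _ ho hmust)
  | f3 hmust _ ih =>
    intro hW'
    obtain ⟨y, hyR, hyW⟩ := (hW _ _ hW').2.2 _ _ hmust
    exact ih y hyR hyW

theorem IsMIAWitness.mincons_inter_eq_empty {W : Set (CState S T)}
    (hW : IsMIAWitness I O mustP mayP mustQ mayQ W) :
    {x | MIncons I O mustP mayP mustQ mayQ x} ∩ W = ∅ :=
  Set.eq_empty_of_forall_notMem fun _ ⟨hF, hx⟩ => hW.notMem_of_mincons hF hx

theorem IsMIA.exists_may_of_must (hR : IsMIA I O mustR mayR) {r : U} {a : A} {R' : Set U}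
    (h : mustR r a R') : ∃ r' ∈ R', mayR r (some a) r' :=
  let ⟨r', hr'⟩ := hR.2.1 _ _ _ h
  ⟨r', hr', hR.2.2.1 _ _ _ _ h hr'⟩

theorem MIARef.exists_must {r : U} {p : S} (h : MIARef O mustR mayR mustP mayP r p)
    {a : A} {P' : Set S} (hp : mustP p a P') :
    ∃ R', mustR r a R' ∧ ∀ r' ∈ R', ∃ p' ∈ P', MIARef O mustR mayR mustP mayP r' p' := by
  obtain ⟨Rel, hSim, hrp⟩ := h
  obtain ⟨R', hr, hmatch⟩ := (hSim r p hrp).1 a P' hp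
  refine ⟨R', hr, fun r' hr' => ?_⟩
  obtain ⟨p', hp', hRel⟩ := hmatch r' hr'
  exact ⟨p', hp', Rel, hSim, hRel⟩

theorem MIARef.exists_weakTr_output {r r' : U} {p : S} (h : MIARef O mustR mayR mustP mayP r p)
    {o : A} (ho : o ∈ O) (hr : mayR r (some o) r') :
    ∃ p', WeakTr mayP p (some o) p' ∧ MIARef O mustR mayR mustP mayP r' p' := by
  obtain ⟨Rel, hSim, hrp⟩ := h
  obtain ⟨p', hp', hRel⟩ := (hSim r p hrp).2.1 o r' ho hr
  exact ⟨p', hp', Rel, hSim, hRel⟩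

theorem MIARef.exists_mem_of_must (hR : IsMIA I O mustR mayR) {r : U} {p : S}
    (h : MIARef O mustR mayR mustP mayP r p) {a : A} {P' : Set S} (hp : mustP p a P') :
    ∃ p', p' ∈ P' := by
  obtain ⟨R', hr, hmatch⟩ := h.exists_must hp
  obtain ⟨r', hr'⟩ := hR.2.1 _ _ _ hr
  obtain ⟨p', hp', -⟩ := hmatch r' hr'
  exact ⟨p', hp'⟩

theorem MIARef.exists_common_of_must_output (hR : IsMIA I O mustR mayR) {r : U} {p : S} {q : T}
    (hrp : MIARef O mustR mayR mustP mayP r p) (hrq : MIARef O mustR mayR mustQ mayQ r q)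
    {o : A} (ho : o ∈ O) {P' : Set S} (hp : mustP p o P') :
    ∃ r' p' q', p' ∈ P' ∧ WeakTr mayQ q (some o) q' ∧
      MIARef O mustR mayR mustP mayP r' p' ∧ MIARef O mustR mayR mustQ mayQ r' q' := by
  obtain ⟨R', hr, hmatch⟩ := hrp.exists_must hp
  obtain ⟨r', hr', hmay⟩ := hR.exists_may_of_must hr
  obtain ⟨p', hp', hrp'⟩ := hmatch r' hr'
  obtain ⟨q', hq', hrq'⟩ := hrq.exists_weakTr_output ho hmay
  exact ⟨r', p', q', hp', hq', hrp', hrq'⟩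

theorem MIARef.exists_common_of_must_input (hR : IsMIA I O mustR mayR) {r : U} {p : S} {q : T}
    (hrp : MIARef O mustR mayR mustP mayP r p) (hrq : MIARef O mustR mayR mustQ mayQ r q)
    {i : A} (hi : i ∈ I) {P' : Set S} {Q' : Set T} (hp : mustP p i P') (hq : mustQ q i Q') :
    ∃ r' p' q', p' ∈ P' ∧ q' ∈ Q' ∧
      MIARef O mustR mayR mustP mayP r' p' ∧ MIARef O mustR mayR mustQ mayQ r' q' := by
  obtain ⟨R₁, hr₁, hmatch₁⟩ := hrp.exists_must hp
  obtain ⟨R₂, hr₂, hmatch₂⟩ := hrq.exists_must hq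
  obtain rfl : R₁ = R₂ := hR.2.2.2.2.2.1 _ _ _ _ hi hr₁ hr₂
  obtain ⟨r', hr'⟩ := hR.2.1 _ _ _ hr₁
  obtain ⟨p', hp', hrp'⟩ := hmatch₁ r' hr'
  obtain ⟨q', hq', hrq'⟩ := hmatch₂ r' hr'
  exact ⟨r', p', q', hp', hq', hrp', hrq'⟩

end

section

variable {A S T : Type} (I O : Set A)
  (mustP : S → A → Set S → Prop) (mayP : S → Lbl A → S → Prop)
  (mustQ : T → A → Set T → Prop) (mayQ : T → Lbl A → T → Prop)

def HasCommonImpl (p : S) (q : T) : Prop :=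
  ∃ (U : Type) (mustR : U → A → Set U → Prop) (mayR : U → Lbl A → U → Prop),
    IsMIA I O mustR mayR ∧ ∃ r : U,
      MIARef O mustR mayR mustP mayP r p ∧ MIARef O mustR mayR mustQ mayQ r q

def commonImplWitness : Set (CState S T) :=
  {x | ∃ p q, x = CState.comb p q ∧ HasCommonImpl I O mustP mayP mustQ mayQ p q} ∪
    {x | ∃ p, x = CState.left p} ∪ {x | ∃ q, x = CState.right q}

variable {I O mustP mayP mustQ mayQ}

theorem comb_mem_commonImplWitness {p : S} {q : T} :
    CState.comb p q ∈ commonImplWitness I O mustP mayP mustQ mayQ ↔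
      HasCommonImpl I O mustP mayP mustQ mayQ p q := by
  simp [commonImplWitness]

theorem HasCommonImpl.symm {p : S} {q : T} (h : HasCommonImpl I O mustP mayP mustQ mayQ p q) :
    HasCommonImpl I O mustQ mayQ mustP mayP q p :=
  let ⟨U, mustR, mayR, hR, r, hrp, hrq⟩ := h
  ⟨U, mustR, mayR, hR, r, hrq, hrp⟩

theorem HasCommonImpl.exists_common_of_must_output {p : S} {q : T}
    (h : HasCommonImpl I O mustP mayP mustQ mayQ p q) {o : A} (ho : o ∈ O) {P' : Set S}
    (hp : mustP p o P') :
    ∃ p' q', p' ∈ P' ∧ WeakTr mayQ q (some o) q' ∧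
      HasCommonImpl I O mustP mayP mustQ mayQ p' q' :=
  let ⟨U, mustR, mayR, hR, _, hrp, hrq⟩ := h
  let ⟨r', p', q', hp', hq', hrp', hrq'⟩ := hrp.exists_common_of_must_output hR hrq ho hp
  ⟨p', q', hp', hq', U, mustR, mayR, hR, r', hrp', hrq'⟩

theorem HasCommonImpl.exists_common_of_must_input {p : S} {q : T}
    (h : HasCommonImpl I O mustP mayP mustQ mayQ p q) {i : A} (hi : i ∈ I) {P' : Set S}
    {Q' : Set T} (hp : mustP p i P') (hq : mustQ q i Q') :
    ∃ p' q', p' ∈ P' ∧ q' ∈ Q' ∧ HasCommonImpl I O mustP mayP mustQ mayQ p' q' :=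
  let ⟨U, mustR, mayR, hR, _, hrp, hrq⟩ := h
  let ⟨r', p', q', hp', hq', hrp', hrq'⟩ := hrp.exists_common_of_must_input hR hrq hi hp hq
  ⟨p', q', hp', hq', U, mustR, mayR, hR, r', hrp', hrq'⟩

theorem HasCommonImpl.exists_mem_left_of_must {p : S} {q : T}
    (h : HasCommonImpl I O mustP mayP mustQ mayQ p q) {a : A} {P' : Set S}
    (hp : mustP p a P') : ∃ p', p' ∈ P' :=
  let ⟨_, _, _, hR, _, hrp, _⟩ := h
  hrp.exists_mem_of_must hR hp

theorem HasCommonImpl.exists_mem_inter_of_mconjMust {p : S} {q : T}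
    (h : HasCommonImpl I O mustP mayP mustQ mayQ p q) {a : A} {R' : Set (CState S T)}
    (hm : MConjMust I O mustP mayP mustQ mayQ (CState.comb p q) a R') :
    (R' ∩ commonImplWitness I O mustP mayP mustQ mayQ).Nonempty := by
  cases hm with
  | omust1 ho hp _ =>
    obtain ⟨p', q', hp', hq', hpq'⟩ := h.exists_common_of_must_output ho hp
    exact ⟨.comb p' q', ⟨p', q', rfl, hp', hq'⟩, comb_mem_commonImplWitness.2 hpq'⟩
  | omust2 ho _ hq =>
    obtain ⟨q', p', hq', hp', hqp'⟩ := h.symm.exists_common_of_must_output ho hq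
    exact ⟨.comb p' q', ⟨p', q', rfl, hp', hq'⟩, comb_mem_commonImplWitness.2 hqp'.symm⟩
  | imust1 _ hp _ =>
    obtain ⟨p', hp'⟩ := h.exists_mem_left_of_must hp
    exact ⟨.left p', ⟨p', hp', rfl⟩, .inl (.inr ⟨p', rfl⟩)⟩
  | imust2 _ _ hq =>
    obtain ⟨q', hq'⟩ := h.symm.exists_mem_left_of_must hq
    exact ⟨.right q', ⟨q', hq', rfl⟩, .inr ⟨q', rfl⟩⟩
  | imust3 hi hp hq =>
    obtain ⟨p', q', hp', hq', hpq'⟩ := h.exists_common_of_must_input hi hp hq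
    exact ⟨.comb p' q', ⟨p', q', rfl, hp', hq'⟩, comb_mem_commonImplWitness.2 hpq'⟩

theorem isMIAWitness_commonImplWitness :
    IsMIAWitness I O mustP mayP mustQ mayQ (commonImplWitness I O mustP mayP mustQ mayQ) := by
  intro p q hpq
  have h := comb_mem_commonImplWitness.1 hpq
  refine ⟨fun o P' ho hp => ?_, fun o Q' ho hq => ?_, fun a R' hm => ?_⟩
  · obtain ⟨-, q', -, hq', -⟩ := h.exists_common_of_must_output ho hp
    exact ⟨q', hq'⟩
  · obtain ⟨-, p', -, hp', -⟩ := h.symm.exists_common_of_must_output ho hq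
    exact ⟨p', hp'⟩
  · exact h.exists_mem_inter_of_mconjMust hm

end

theorem mia_concrete_witness_general {A S T : Type} (I O : Set A)
    (mustP : S → A → Set S → Prop) (mayP : S → Lbl A → S → Prop)
    (mustQ : T → A → Set T → Prop) (mayQ : T → Lbl A → T → Prop) :
    (∀ W : Set (CState S T), IsMIAWitness I O mustP mayP mustQ mayQ W →
      {x | MIncons I O mustP mayP mustQ mayQ x} ∩ W = ∅) ∧
    IsMIAWitness I O mustP mayP mustQ mayQ
      ({x | ∃ p q, x = CState.comb p q ∧
          ∃ (U : Type) (mustR : U → A → Set U → Prop) (mayR : U → Lbl A → U → Prop),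
            IsMIA I O mustR mayR ∧ ∃ r : U,
              MIARef O mustR mayR mustP mayP r p ∧ MIARef O mustR mayR mustQ mayQ r q} ∪
        {x | ∃ p, x = CState.left p} ∪ {x | ∃ q, x = CState.right q}) :=
  ⟨fun _ hW => hW.mincons_inter_eq_empty, isMIAWitness_commonImplWitness⟩

/-- Lemma 4.6 (MIA-witness): (i) every MIA-witness is disjoint from the
inconsistency set `F`; (ii) the combined states with a common implementation
together with all states of `P` and `Q` form a MIA-witness of `P & Q`. -/
theorem mia_concrete_witness {A S T : Type} (I O : Set A)
    (mustP : S → A → Set S → Prop) (mayP : S → Lbl A → S → Prop)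
    (mustQ : T → A → Set T → Prop) (mayQ : T → Lbl A → T → Prop)
    (hP : IsMIA I O mustP mayP) (hQ : IsMIA I O mustQ mayQ) :
    (∀ W : Set (CState S T), IsMIAWitness I O mustP mayP mustQ mayQ W →
      {x | MIncons I O mustP mayP mustQ mayQ x} ∩ W = ∅) ∧
    IsMIAWitness I O mustP mayP mustQ mayQ
      ({x | ∃ p q, x = CState.comb p q ∧
          ∃ (U : Type) (mustR : U → A → Set U → Prop) (mayR : U → Lbl A → U → Prop),
            IsMIA I O mustR mayR ∧ ∃ r : U,
              MIARef O mustR mayR mustP mayP r p ∧ MIARef O mustR mayR mustQ mayQ r q} ∪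
        {x | ∃ p, x = CState.left p} ∪ {x | ∃ q, x = CState.right q}) :=
  mia_concrete_witness_general I O mustP mayP mustQ mayQ
end
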